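/- arXiv:2009.01346 — 6 statements merged into one kernel-verified Lean document; each statement's English description precedes it below -/
import Mathlib

section
/- Let n ≥ 2 be an integer with at least 3 prime factors counting multiplicity, and let ω = e^{2πi/n}. Then there exist a_0, …, a_{n−1}, b_0, …, b_{n−1} ∈ {0,1} such that for every 0 ≤ k ≤ n−1 there exists an integer c_k with Σ_{i=0}^{n−1} a_i ω^{i·k} = ω^{c_k} · Σ_{i=0}^{n−1} b_i ω^{i·k}, yet the sequences (a_i) and (b_i) are not cyclic shifts of each other. -/
/-- `primRoot n` is the primitive `n`-th root of unity `e^{2πi/n}`. -/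
noncomputable def primRoot (n : ℕ) : ℂ :=
  Complex.exp (2 * Real.pi * Complex.I / n)

/-- `expSum n a k = Σ_{i=0}^{n-1} a_i ω^{i·k}` where `ω = e^{2πi/n}`. -/
noncomputable def expSum (n : ℕ) (a : ℕ → ℕ) (k : ℕ) : ℂ :=
  ∑ i ∈ Finset.range n, (a i : ℂ) * primRoot n ^ (i * k)

/-!
Write `n = p q m` with `p, q, m ≥ 2`, let `P = {0, m, …, (q - 1) m}` and
`E = 1 + q m {0, …, p - 1}`, and take `a = 1_{P ∪ E}`, `b = 1_{(P + m) ∪ E}`. At frequency `k`,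
with `x = ω ^ k`, the two transforms are `G + x H` and `x ^ m G + x H`, where
`G = ∑_{t<q} x ^ (m t)` and `H = ∑_{s<p} x ^ (q m s)`. Since `E` is a coset of the subgroup of
order `p`, `H = 0` unless `x ^ (q m) = 1`, and then `(x ^ m - 1) G = x ^ (q m) - 1 = 0`; either way
the transforms differ by a power of `ω`. At `k = 1` we have `H = 0 ≠ G`, so a cyclic shift by `j`
forces `ω ^ (j + m) = 1`, hence `b (1 + m) = a 1`; but `1 ∈ E` while `1 + m ∉ (P + m) ∪ E`.
-/

open Finset

theorem exists_eq_mul_mul_of_three_le_length_primeFactorsList {n : ℕ}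
    (h : 3 ≤ n.primeFactorsList.length) :
    ∃ p q m, 2 ≤ p ∧ 2 ≤ q ∧ 2 ≤ m ∧ n = p * q * m := by
  have hn : n ≠ 0 := by rintro rfl; simp at h
  rcases hl : n.primeFactorsList with _ | ⟨p, _ | ⟨q, _ | ⟨r, t⟩⟩⟩ <;> simp only [hl,
    List.length_nil, List.length_cons] at h <;> try omega
  have hprime : ∀ x ∈ p :: q :: r :: t, x.Prime := fun x hx =>
    Nat.prime_of_mem_primeFactorsList (hl ▸ hx)
  refine ⟨p, q, r * t.prod, (hprime p (by simp)).two_le, (hprime q (by simp)).two_le, ?_, ?_⟩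
  · have : 0 < t.prod := List.prod_pos fun x hx => (hprime x (by simp [hx])).pos
    nlinarith [(hprime r (by simp)).two_le]
  · rw [← Nat.prod_primeFactorsList hn, hl]
    simp [mul_assoc]

theorem geom_sum_ne_zero_of_pow_ne_one {R : Type*} [Ring R] {y : R} {r : ℕ} (h : y ^ r ≠ 1) :
    ∑ i ∈ range r, y ^ i ≠ 0 := fun h0 =>
  h (sub_eq_zero.1 (by rw [← geom_sum_mul, h0, zero_mul]))

theorem geom_sum_eq_zero_of_pow_eq_one {R : Type*} [Ring R] [NoZeroDivisors R] {y : R} {r : ℕ}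
    (hy : y ≠ 1) (h : y ^ r = 1) : ∑ i ∈ range r, y ^ i = 0 := by
  have := geom_sum_mul y r
  rw [h, sub_self] at this
  exact (mul_eq_zero.1 this).resolve_right (sub_ne_zero.2 hy)

theorem sum_range_comp_add_mod {M : Type*} [AddCommMonoid M] (f : ℕ → M) (n j : ℕ) :
    ∑ i ∈ range n, f ((i + j) % n) = ∑ i ∈ range n, f i := by
  rcases Nat.eq_zero_or_pos n with rfl | hn
  · simp
  have : NeZero n := ⟨hn.ne'⟩
  rw [← Fin.sum_univ_eq_sum_range, ← Fin.sum_univ_eq_sum_range]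
  refine Fintype.sum_equiv (Equiv.addRight (Fin.ofNat n j)) _ _ fun i => ?_
  simp [Fin.val_add]

def arithProg (c d r : ℕ) : Finset ℕ := (range r).image (c + d * ·)

section arithProg

variable {c d r x : ℕ}

theorem mem_arithProg : x ∈ arithProg c d r ↔ ∃ t < r, c + d * t = x := by
  simp [arithProg]

theorem modEq_of_mem_arithProg (hx : x ∈ arithProg c d r) : x ≡ c [MOD d] := by
  obtain ⟨t, -, rfl⟩ := mem_arithProg.1 hx
  simp [Nat.ModEq]

theorem disjoint_arithProg {g c' d' r' : ℕ} (hd : g ∣ d) (hd' : g ∣ d')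
    (h : ¬ c ≡ c' [MOD g]) : Disjoint (arithProg c d r) (arithProg c' d' r') :=
  disjoint_left.2 fun _ hx hx' =>
    h (((modEq_of_mem_arithProg hx).of_dvd hd).symm.trans
      ((modEq_of_mem_arithProg hx').of_dvd hd'))

theorem arithProg_subset_range {N : ℕ} (h : c + d * r < N + d) : arithProg c d r ⊆ range N := by
  intro x hx
  obtain ⟨t, ht, rfl⟩ := mem_arithProg.1 hx
  have : d * (t + 1) ≤ d * r := Nat.mul_le_mul_left d ht
  rw [mem_range]
  linarith

theorem sum_pow_arithProg {R : Type*} [Semiring R] (hd : d ≠ 0) (y : R) :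
    ∑ i ∈ arithProg c d r, y ^ i = y ^ c * ∑ t ∈ range r, (y ^ d) ^ t := by
  rw [arithProg, sum_image fun _ _ _ _ h => Nat.eq_of_mul_eq_mul_left (Nat.pos_of_ne_zero hd)
    (Nat.add_left_cancel h), mul_sum]
  simp only [pow_add, pow_mul]

end arithProg

def setA (p q m : ℕ) : Finset ℕ := arithProg 0 m q ∪ arithProg 1 (q * m) p

def setB (p q m : ℕ) : Finset ℕ := arithProg m m q ∪ arithProg 1 (q * m) p

section sets

variable {p q m : ℕ}

theorem setA_subset_range (hp : 2 ≤ p) (hq : 2 ≤ q) (hm : 2 ≤ m) :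
    setA p q m ⊆ range (p * q * m) :=
  union_subset (arithProg_subset_range (by nlinarith [Nat.mul_le_mul_right (q * m) hp]))
    (arithProg_subset_range (by nlinarith))

theorem setB_subset_range (hp : 2 ≤ p) (hq : 2 ≤ q) (hm : 2 ≤ m) :
    setB p q m ⊆ range (p * q * m) :=
  union_subset (arithProg_subset_range (by nlinarith [Nat.mul_le_mul_right (q * m) hp]))
    (arithProg_subset_range (by nlinarith))

theorem one_mem_setA (hp : 2 ≤ p) : 1 ∈ setA p q m :=
  mem_union_right _ (mem_arithProg.2 ⟨0, by omega, by simp⟩)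

theorem one_add_notMem_setB (hq : 2 ≤ q) (hm : 2 ≤ m) : 1 + m ∉ setB p q m := by
  rw [setB, mem_union, not_or]
  constructor
  · intro h
    have : 1 ≡ 0 [MOD m] := by simpa [Nat.ModEq] using modEq_of_mem_arithProg h
    simp [Nat.ModEq, Nat.one_mod_eq_one.2 (by omega : m ≠ 1)] at this
  · intro h
    have : m ≡ 0 [MOD q * m] :=
      Nat.ModEq.add_left_cancel' 1 (modEq_of_mem_arithProg h)
    have := Nat.le_of_dvd (by omega) ((Nat.modEq_zero_iff_dvd).1 this)
    nlinarith

theorem sum_pow_setA {R : Type*} [Semiring R] (hq : q ≠ 0) (hm : 2 ≤ m) (y : R) :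
    ∑ i ∈ setA p q m, y ^ i =
      ∑ t ∈ range q, (y ^ m) ^ t + y * ∑ s ∈ range p, (y ^ (q * m)) ^ s := by
  rw [setA, sum_union (disjoint_arithProg dvd_rfl (dvd_mul_left m q) ?_),
    sum_pow_arithProg (by omega), sum_pow_arithProg (by positivity), pow_zero, one_mul, pow_one]
  simp [Nat.ModEq, Nat.one_mod_eq_one.2 (by omega : m ≠ 1)]

theorem sum_pow_setB {R : Type*} [Semiring R] (hq : q ≠ 0) (hm : 2 ≤ m) (y : R) :
    ∑ i ∈ setB p q m, y ^ i =
      y ^ m * ∑ t ∈ range q, (y ^ m) ^ t + y * ∑ s ∈ range p, (y ^ (q * m)) ^ s := by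
  rw [setB, sum_union (disjoint_arithProg dvd_rfl (dvd_mul_left m q) ?_),
    sum_pow_arithProg (by omega), sum_pow_arithProg (by positivity), pow_one]
  simp [Nat.ModEq, Nat.one_mod_eq_one.2 (by omega : m ≠ 1)]

variable {R : Type*} [CommRing R] [NoZeroDivisors R]

theorem sum_pow_setB_eq_or (hq : q ≠ 0) (hm : 2 ≤ m) {y : R}
    (hy : y ^ (p * q * m) = 1) :
    ∑ i ∈ setB p q m, y ^ i = y ^ m * ∑ i ∈ setA p q m, y ^ i ∨
      ∑ i ∈ setB p q m, y ^ i = ∑ i ∈ setA p q m, y ^ i := by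
  rw [sum_pow_setA hq hm, sum_pow_setB hq hm]
  by_cases hqm : y ^ (q * m) = 1
  · right
    have := geom_sum_mul (y ^ m) q
    rw [← pow_mul, mul_comm m, hqm, sub_self, mul_sub, mul_one, sub_eq_zero] at this
    rw [mul_comm (y ^ m), this]
  · left
    rw [geom_sum_eq_zero_of_pow_eq_one hqm (by rw [← pow_mul, ← hy]; ring_nf)]
    ring

theorem sum_pow_setA_ne_zero_and_sum_pow_setB_eq (hp : 2 ≤ p) (hq : 2 ≤ q) (hm : 2 ≤ m)
    {ζ : R} (hζ : IsPrimitiveRoot ζ (p * q * m)) :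
    ∑ i ∈ setA p q m, ζ ^ i ≠ 0 ∧
      ∑ i ∈ setB p q m, ζ ^ i = ζ ^ m * ∑ i ∈ setA p q m, ζ ^ i := by
  have hpow_ne_one : ∀ e, 0 < e → e < p * q * m → ζ ^ e ≠ 1 := fun e he hlt h =>
    absurd (Nat.le_of_dvd he (hζ.dvd_of_pow_eq_one e h)) (by omega)
  have hqm : q * m < p * q * m := by nlinarith [Nat.mul_le_mul_right (q * m) hp]
  have hE : ∑ s ∈ range p, (ζ ^ (q * m)) ^ s = 0 :=
    geom_sum_eq_zero_of_pow_eq_one (hpow_ne_one _ (by positivity) hqm)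
      (by rw [← pow_mul, ← hζ.pow_eq_one]; ring_nf)
  rw [sum_pow_setA (by omega) hm, sum_pow_setB (by omega) hm, hE]
  refine ⟨?_, by ring⟩
  rw [mul_zero, add_zero]
  exact geom_sum_ne_zero_of_pow_ne_one
    (by rw [← pow_mul, mul_comm]; exact hpow_ne_one _ (by positivity) hqm)

end sets

theorem isPrimitiveRoot_primRoot {n : ℕ} (hn : n ≠ 0) : IsPrimitiveRoot (primRoot n) n :=
  Complex.isPrimitiveRoot_exp n hn

theorem primRoot_pow_pow_self (n k : ℕ) : (primRoot n ^ k) ^ n = 1 := by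
  rcases eq_or_ne n 0 with rfl | hn
  · exact pow_zero _
  · rw [pow_right_comm, (isPrimitiveRoot_primRoot hn).pow_eq_one, one_pow]

def indicatorSeq (S : Finset ℕ) (i : ℕ) : ℕ := if i ∈ S then 1 else 0

theorem indicatorSeq_eq_zero_or_one (S : Finset ℕ) (i : ℕ) :
    indicatorSeq S i = 0 ∨ indicatorSeq S i = 1 := by
  unfold indicatorSeq
  split_ifs <;> simp

theorem expSum_indicatorSeq {n : ℕ} {S : Finset ℕ} (hS : S ⊆ range n) (k : ℕ) :
    expSum n (indicatorSeq S) k = ∑ i ∈ S, (primRoot n ^ k) ^ i := by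
  simp only [expSum, indicatorSeq, Nat.cast_ite, Nat.cast_one, Nat.cast_zero, ite_mul, one_mul,
    zero_mul, sum_ite_mem, inter_eq_right.2 hS, ← pow_mul, mul_comm k]

theorem expSum_of_shift {n j : ℕ} {a b : ℕ → ℕ} (hab : ∀ i < n, b i = a ((i + j) % n))
    (k : ℕ) : primRoot n ^ (j * k) * expSum n b k = expSum n a k := by
  rw [expSum, expSum, mul_sum,
    ← sum_range_comp_add_mod (fun i => (a i : ℂ) * primRoot n ^ (i * k)) n j]
  refine sum_congr rfl fun i hi => ?_
  rw [hab i (mem_range.1 hi), mul_comm ((i + j) % n), pow_mul _ k,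
    ← pow_eq_pow_mod _ (primRoot_pow_pow_self n k)]
  ring

theorem exists_expSum_setA_eq_zpow_mul {p q m : ℕ} (hp : 2 ≤ p) (hq : 2 ≤ q) (hm : 2 ≤ m)
    (k : ℕ) : ∃ c : ℤ, expSum (p * q * m) (indicatorSeq (setA p q m)) k =
      primRoot (p * q * m) ^ c * expSum (p * q * m) (indicatorSeq (setB p q m)) k := by
  rw [expSum_indicatorSeq (setA_subset_range hp hq hm),
    expSum_indicatorSeq (setB_subset_range hp hq hm)]
  rcases sum_pow_setB_eq_or (by omega : q ≠ 0) hm (primRoot_pow_pow_self _ k) with h | h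
  · have h0 : primRoot (p * q * m) ≠ 0 := Complex.exp_ne_zero _
    refine ⟨-(k * m : ℕ), ?_⟩
    rw [h, zpow_neg, zpow_natCast, pow_mul, ← mul_assoc,
      inv_mul_cancel₀ (pow_ne_zero _ (pow_ne_zero _ h0)), one_mul]
  · exact ⟨0, by rw [h, zpow_zero, one_mul]⟩

theorem not_exists_shift_setB_setA {p q m : ℕ} (hp : 2 ≤ p) (hq : 2 ≤ q) (hm : 2 ≤ m) :
    ¬ ∃ j : ℕ, ∀ i < p * q * m,
      indicatorSeq (setB p q m) i = indicatorSeq (setA p q m) ((i + j) % (p * q * m)) := by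
  rintro ⟨j, hj⟩
  have hζ := isPrimitiveRoot_primRoot (n := p * q * m) (by positivity)
  obtain ⟨hA, hB⟩ := sum_pow_setA_ne_zero_and_sum_pow_setB_eq hp hq hm hζ
  have hshift := expSum_of_shift hj 1
  rw [expSum_indicatorSeq (setA_subset_range hp hq hm),
    expSum_indicatorSeq (setB_subset_range hp hq hm), pow_one, hB, ← mul_assoc,
    ← pow_add, mul_one] at hshift
  obtain ⟨c, hc⟩ : p * q * m ∣ j + m :=
    hζ.dvd_of_pow_eq_one _ ((mul_eq_right₀ hA).1 hshift)
  have h1m : 1 + m < p * q * m := by nlinarith [Nat.mul_le_mul_right (q * m) hp]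
  have := hj (1 + m) h1m
  rw [show 1 + m + j = 1 + p * q * m * c by omega, Nat.add_mul_mod_self_left,
    Nat.mod_eq_of_lt (by omega)] at this
  simp [indicatorSeq, one_add_notMem_setB hq hm, one_mem_setA hp] at this

theorem stmt_1_general (n : ℕ)
    (hfac : 3 ≤ (Nat.primeFactorsList n).length) :
    ∃ a b : ℕ → ℕ,
      (∀ i < n, a i = 0 ∨ a i = 1) ∧ (∀ i < n, b i = 0 ∨ b i = 1) ∧
      (∀ k < n, ∃ c : ℤ, expSum n a k = primRoot n ^ c * expSum n b k) ∧
      ¬ ∃ j : ℕ, ∀ i < n, b i = a ((i + j) % n) := by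
  obtain ⟨p, q, m, hp, hq, hm, rfl⟩ :=
    exists_eq_mul_mul_of_three_le_length_primeFactorsList hfac
  exact ⟨indicatorSeq (setA p q m), indicatorSeq (setB p q m),
    fun i _ => indicatorSeq_eq_zero_or_one _ i, fun i _ => indicatorSeq_eq_zero_or_one _ i,
    fun k _ => exists_expSum_setA_eq_zpow_mul hp hq hm k, not_exists_shift_setB_setA hp hq hm⟩

theorem stmt_1 (n : ℕ) (hn : 2 ≤ n)
    (hfac : 3 ≤ (Nat.primeFactorsList n).length) :
    ∃ a b : ℕ → ℕ,
      (∀ i < n, a i = 0 ∨ a i = 1) ∧ (∀ i < n, b i = 0 ∨ b i = 1) ∧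
      (∀ k < n, ∃ c : ℤ, expSum n a k = primRoot n ^ c * expSum n b k) ∧
      ¬ ∃ j : ℕ, ∀ i < n, b i = a ((i + j) % n) :=
  stmt_1_general n hfac
end

section
/- Let n = p² where p is an odd prime, and let ω = e^{2πi/n}. Suppose a_0, …, a_{n−1}, b_0, …, b_{n−1} ∈ {0,1} are such that for every 0 ≤ k ≤ n−1 there exists an integer c_k with Σ_{i=0}^{n−1} a_i ω^{i·k} = ω^{c_k} · Σ_{i=0}^{n−1} b_i ω^{i·k}. Then the sequences (a_i) and (b_i) are cyclic shifts of each other. -/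
open Finset Polynomial

theorem Finset.sum_range_mul_eq_sum_sum {M : Type*} [AddCommMonoid M] (f : ℕ → M) (m n : ℕ) :
    ∑ i ∈ range (m * n), f i = ∑ j ∈ range m, ∑ l ∈ range n, f (j + m * l) := by
  induction n with
  | zero => simp
  | succ n ih =>
    rw [Nat.mul_succ, sum_range_add, ih]
    simp only [sum_range_succ, sum_add_distrib, add_comm]

theorem Finset.sum_range_add_mod {M : Type*} [AddCommMonoid M] (f : ℕ → M) {n : ℕ} (hn : n ≠ 0)
    (s : ℕ) : ∑ i ∈ range n, f ((i + s) % n) = ∑ i ∈ range n, f i := by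
  have : NeZero n := ⟨hn⟩
  rw [← Fin.sum_univ_eq_sum_range (fun i => f ((i + s) % n)), ← Fin.sum_univ_eq_sum_range]
  exact Fintype.sum_equiv (Equiv.addRight (Fin.ofNat n s)) _ _ (fun i => by simp [Fin.val_add])

theorem pow_mul_sum_add_mod {R : Type*} [CommSemiring R] {n : ℕ} (hn : n ≠ 0) {x : R}
    (hx : x ^ n = 1) (f : ℕ → R) (s : ℕ) :
    x ^ s * ∑ i ∈ range n, f ((i + s) % n) * x ^ i = ∑ i ∈ range n, f i * x ^ i := by
  rw [mul_sum, ← sum_range_add_mod (fun i => f i * x ^ i) hn s]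
  refine sum_congr rfl fun i _ => ?_
  rw [← pow_eq_pow_mod _ hx, pow_add]
  ring

theorem exists_add_mul_eq_of_lt_sq {p i : ℕ} (hi : i < p ^ 2) :
    ∃ j < p, ∃ l < p, j + p * l = i :=
  ⟨i % p, Nat.mod_lt _ (Nat.pos_of_ne_zero fun h => by simp [h] at hi),
    i / p, Nat.div_lt_of_lt_mul (by rwa [← sq]), Nat.mod_add_div i p⟩

theorem Nat.Prime.apply_eq_apply_zero_of_add_mod {α : Type*} {p d : ℕ} (hp : p.Prime)
    (hd : ¬ p ∣ d) {g : ℕ → α} (hg : ∀ j < p, g ((j + d) % p) = g j) {j : ℕ} (hj : j < p) :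
    g j = g 0 := by
  have horbit : ∀ k, g (d * k % p) = g 0 := fun k => by
    induction k with
    | zero => simp
    | succ k ih => rw [mul_add_one, ← Nat.mod_add_mod, hg _ (Nat.mod_lt _ hp.pos), ih]
  obtain ⟨m, -, hm⟩ := Nat.exists_mul_mod_eq_of_coprime j
    (hp.coprime_iff_not_dvd.2 hd).symm hp.ne_zero
  rw [← horbit m, hm, Nat.mod_eq_of_lt hj]

theorem apply_eq_of_dvd_sum {p : ℕ} {f : ℕ → ℕ} (hf : ∀ l < p, f l ≤ 1)
    (h : p ∣ ∑ l ∈ range p, f l) {l : ℕ} (hl : l < p) : f l = f 0 := by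
  obtain ⟨k, hk⟩ := h
  have hle : ∑ l ∈ range p, f l ≤ p := by
    simpa using sum_le_sum fun l hl => hf l (mem_range.1 hl)
  rcases Nat.eq_zero_or_pos k with rfl | hk
  · have hzero := sum_eq_zero_iff.1 hk
    rw [hzero l (mem_range.2 hl), hzero 0 (mem_range.2 (by omega))]
  · have hone := (sum_eq_sum_iff_of_le fun l hl => hf l (mem_range.1 hl)).1
      (by simp only [sum_const, card_range, smul_eq_mul, mul_one]; nlinarith)
    rw [hone l (mem_range.2 hl), hone 0 (mem_range.2 (by omega))]

theorem Polynomial.coeff_mul_geom_sum_X_pow {R : Type*} [Semiring R] {G : R[X]} {m : ℕ}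
    (hG : G.degree < m) {j : ℕ} (hj : j < m) :
    ∀ {n l : ℕ}, l < n → (G * ∑ i ∈ range n, (X ^ m) ^ i).coeff (j + m * l) = G.coeff j := by
  intro n
  induction n with
  | zero => simp
  | succ n ih =>
    intro l hl
    rw [geom_sum_succ, mul_add, mul_one, ← mul_assoc, ← (commute_X_pow G m).eq, mul_assoc,
      coeff_add, coeff_X_pow_mul']
    rcases l with _ | l
    · simp [Nat.not_le.mpr hj]
    · rw [if_pos (by nlinarith), show j + m * (l + 1) - m = j + m * l by rw [Nat.mul_succ]; omega,
        ih (by omega), coeff_eq_zero_of_degree_lt (n := j + m * (l + 1))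
          (hG.trans_le (by exact_mod_cast (by nlinarith))), add_zero]

theorem IsPrimitiveRoot.apply_add_pow_mul_eq_of_sum_eq_zero {K : Type*} [Field K] [CharZero K]
    {p k : ℕ} (hp : p.Prime) {ω : K} (hω : IsPrimitiveRoot ω (p ^ (k + 1))) {t : ℕ → ℤ}
    (h : ∑ i ∈ range (p ^ (k + 1)), (t i : K) * ω ^ i = 0) {j l : ℕ} (hj : j < p ^ k)
    (hl : l < p) : t (j + p ^ k * l) = t j := by
  have hM : 0 < p ^ (k + 1) := pow_pos hp.pos _
  set T : ℤ[X] := ∑ i ∈ range (p ^ (k + 1)), C (t i) * X ^ i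
  have hcoeff : ∀ i < p ^ (k + 1), T.coeff i = t i := fun i hi => by
    simp [T, hi]
  have hdeg : T.degree < (p ^ (k + 1) : ℕ) := by
    simpa only [T, Finset.sum_range] using degree_sum_fin_lt (fun i : Fin (p ^ (k + 1)) => t i)
  obtain ⟨G, hG⟩ : cyclotomic (p ^ (k + 1)) ℤ ∣ T := by
    rw [cyclotomic_eq_minpoly hω hM]
    exact minpoly.isIntegrallyClosed_dvd (hω.isIntegral hM) (by simpa [T] using h)
  have hGdeg : G.degree < (p ^ k : ℕ) := by
    rw [hG, degree_mul, degree_cyclotomic, Nat.totient_prime_pow_succ hp,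
      show p ^ (k + 1) = p ^ k * (p - 1) + p ^ k by
        rw [pow_succ, Nat.mul_sub_one, Nat.sub_add_cancel (Nat.le_mul_of_pos_right _ hp.pos)],
      Nat.cast_add] at hdeg
    exact (WithBot.add_lt_add_iff_left WithBot.coe_ne_bot).1 hdeg
  rw [hG, cyclotomic_prime_pow_eq_geom_sum hp, mul_comm] at hcoeff
  have key : ∀ l < p, t (j + p ^ k * l) = G.coeff j := fun l hl => by
    rw [← hcoeff _ (by rw [pow_succ]; nlinarith), coeff_mul_geom_sum_X_pow hGdeg hj hl]
  simpa using (key l hl).trans (key 0 hp.pos).symm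

theorem IsPrimitiveRoot.apply_add_mul_eq_of_sum_sum_eq_zero {K : Type*} [Field K] [CharZero K]
    {p : ℕ} (hp : p.Prime) {ω : K} (hω : IsPrimitiveRoot ω (p ^ 2)) {g : ℕ → ℕ → ℤ}
    (h : ∑ j ∈ range p, ∑ l ∈ range p, (g j l : K) * ω ^ (j + p * l) = 0) {j l : ℕ}
    (hj : j < p) (hl : l < p) : g j l = g j 0 := by
  have hdigits : ∀ {j} l, j < p → (j + p * l) % p = j ∧ (j + p * l) / p = l := fun l hj => by
    rw [Nat.add_mul_mod_self_left, Nat.mod_eq_of_lt hj, Nat.add_mul_div_left _ _ hp.pos,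
      Nat.div_eq_of_lt hj, zero_add]
    exact ⟨rfl, rfl⟩
  have hsum : ∑ i ∈ range (p ^ (1 + 1)), (g (i % p) (i / p) : K) * ω ^ i = 0 := by
    rw [show p ^ (1 + 1) = p * p by ring, sum_range_mul_eq_sum_sum, ← h]
    refine sum_congr rfl fun j hj => sum_congr rfl fun l _ => ?_
    rw [(hdigits l (mem_range.1 hj)).1, (hdigits l (mem_range.1 hj)).2]
  have := hω.apply_add_pow_mul_eq_of_sum_eq_zero (t := fun i => g (i % p) (i / p)) (j := j) hp hsum
    (by rwa [pow_one]) hl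
  simpa [(hdigits l hj).1, (hdigits l hj).2, Nat.mod_eq_of_lt hj, Nat.div_eq_of_lt hj] using this

theorem IsPrimitiveRoot.sub_eq_of_sum_eq_pow_mul_sum {K : Type*} [Field K] [CharZero K] {p : ℕ}
    (hp : p.Prime) {ω : K} (hω : IsPrimitiveRoot ω (p ^ 2)) {r : ℕ} (hr : r < p) {x y : ℕ → ℤ}
    (h : ∑ l ∈ range p, (y l : K) * (ω ^ p) ^ l = ω ^ r * ∑ l ∈ range p, (x l : K) * (ω ^ p) ^ l)
    {l : ℕ} (hl : l < p) : y l - x l = y 0 - x 0 := by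
  -- the hypothesis says `∑ j < p, ∑ l < p, g j l * ω ^ (j + p * l) = 0`
  set g : ℕ → ℕ → ℤ := fun j l => (if j = 0 then y l else 0) - (if j = r then x l else 0)
  have hg : ∀ j < p, g j l = g j 0 := fun j hj =>
    hω.apply_add_mul_eq_of_sum_sum_eq_zero hp (by
      simp [g, sub_mul, ite_mul, sum_sub_distrib, pow_add, pow_mul, hp.pos, hr]
      rw [h, mul_sum, sub_eq_zero]
      exact sum_congr rfl fun _ _ => mul_left_comm _ _ _) hj hl
  have h0 := hg 0 hp.pos
  have hr' := hg r hr
  simp only [g] at h0 hr'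
  by_cases hr0 : r = 0 <;> simp [hr0] at h0 hr' <;> omega

theorem IsPrimitiveRoot.exists_add_mod_of_sum_eq_zpow_mul_sum {K : Type*} [Field K] [CharZero K]
    {p : ℕ} (hp : p.Prime) {ω : K} (hω : IsPrimitiveRoot ω (p ^ 2)) {x y : ℕ → ℤ}
    (hsum : ∑ j ∈ range p, x j = ∑ j ∈ range p, y j) {e : ℤ}
    (h : ∑ j ∈ range p, (x j : K) * (ω ^ p) ^ j = ω ^ e * ∑ j ∈ range p, (y j : K) * (ω ^ p) ^ j) :
    ∃ d, ∀ j < p, y j = x ((j + d) % p) := by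
  have : NeZero (p ^ 2) := ⟨pow_ne_zero 2 hp.ne_zero⟩
  have hω0 : ω ≠ 0 := hω.ne_zero (NeZero.ne _)
  have hζ : (ω ^ p) ^ p = 1 := by rw [← pow_mul, ← sq, hω.pow_eq_one]
  obtain ⟨e', -, he'⟩ := hω.eq_pow_of_pow_eq_one (ξ := ω ^ (-e)) (by
    rw [← zpow_natCast, ← zpow_mul, mul_comm, zpow_mul, zpow_natCast, hω.pow_eq_one, one_zpow])
  -- `ω ^ e' = ω ^ (e' % p) * (ω ^ p) ^ (e' / p)`, and shifting `x` by `(p - 1) * (e' / p)`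
  -- absorbs the second factor
  set x' := fun j => x ((j + (p - 1) * (e' / p)) % p)
  have hexp : e' + p * ((p - 1) * (e' / p)) = e' % p + p ^ 2 * (e' / p) := by
    have := Nat.mod_add_div e' p
    zify [hp.one_le] at this ⊢
    linear_combination -this
  have hy : ∑ j ∈ range p, (y j : K) * (ω ^ p) ^ j
      = ω ^ (e' % p) * ∑ j ∈ range p, (x' j : K) * (ω ^ p) ^ j := calc
    _ = ω ^ e' * ∑ j ∈ range p, (x j : K) * (ω ^ p) ^ j := by
      rw [he', h, ← mul_assoc, ← zpow_add₀ hω0, neg_add_cancel, zpow_zero, one_mul]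
    _ = ω ^ (e' % p) * ∑ j ∈ range p, (x' j : K) * (ω ^ p) ^ j := by
      rw [← pow_mul_sum_add_mod hp.ne_zero hζ _ ((p - 1) * (e' / p)), ← mul_assoc, ← pow_mul,
        ← pow_add, hexp, pow_add, pow_mul, hω.pow_eq_one, one_pow, mul_one]
  have hconst : ∀ l < p, y l - x' l = y 0 - x' 0 := fun l hl =>
    hω.sub_eq_of_sum_eq_pow_mul_sum hp (Nat.mod_lt e' hp.pos) hy hl
  have hzero : (p : ℤ) * (y 0 - x' 0) = 0 := by
    rw [← card_range p, ← nsmul_eq_mul, ← sum_const,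
      ← sum_congr rfl fun l hl => hconst l (mem_range.1 hl), sum_sub_distrib,
      sum_range_add_mod (fun j => x j) hp.ne_zero, hsum, sub_self]
  refine ⟨(p - 1) * (e' / p), fun j hj => ?_⟩
  have := hconst j hj
  have := (mul_eq_zero.1 hzero).resolve_left (by exact_mod_cast hp.ne_zero)
  simp only [x'] at *
  linarith

def colSum (p : ℕ) (a : ℕ → ℕ) (j : ℕ) : ℕ :=
  ∑ l ∈ range p, a (j + p * l)

theorem sum_mul_pow_eq_sum_colSum {R : Type*} [CommSemiring R] {p : ℕ} {x : R} (hx : x ^ p = 1)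
    (a : ℕ → ℕ) :
    ∑ i ∈ range (p ^ 2), (a i : R) * x ^ i = ∑ j ∈ range p, (colSum p a j : R) * x ^ j := by
  rw [sq, sum_range_mul_eq_sum_sum]
  refine sum_congr rfl fun j _ => ?_
  simp [colSum, sum_mul, pow_add, pow_mul, hx]

theorem sum_colSum (p : ℕ) (a : ℕ → ℕ) :
    ∑ j ∈ range p, colSum p a j = ∑ i ∈ range (p ^ 2), a i := by
  rw [sq, sum_range_mul_eq_sum_sum]
  rfl

theorem colSum_sub_colSum {p j : ℕ} {a b : ℕ → ℕ}
    (h : ∀ l < p, (b (j + p * l) : ℤ) - a (j + p * l) = b j - a j) :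
    (colSum p b j : ℤ) - colSum p a j = p * ((b j : ℤ) - a j) := by
  simp only [colSum, Nat.cast_sum, ← sum_sub_distrib]
  rw [sum_congr rfl fun l hl => h l (mem_range.1 hl)]
  simp [mul_sub]

theorem colSum_eq_mul {p j : ℕ} {a : ℕ → ℕ} (h : ∀ l < p, a (j + p * l) = a j) :
    colSum p a j = p * a j := by
  rw [colSum, sum_congr rfl fun l hl => h l (mem_range.1 hl)]
  simp

theorem apply_add_mul_eq_of_apply_ne {p j : ℕ} {a b : ℕ → ℕ} (ha : ∀ l < p, a (j + p * l) ≤ 1)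
    (hb : ∀ l < p, b (j + p * l) ≤ 1)
    (ht : ∀ l < p, (b (j + p * l) : ℤ) - a (j + p * l) = b j - a j) (hne : b j ≠ a j) {l : ℕ}
    (hl : l < p) : a (j + p * l) = a j := by
  have := ht l hl
  have := ha l hl; have := hb l hl
  have := ha 0 (by omega); have := hb 0 (by omega)
  simp only [mul_zero, add_zero] at *
  omega

theorem apply_eq_of_columns {p d : ℕ} {a b : ℕ → ℕ}
    (ha : ∀ j < p, ∀ l < p, a (j + p * l) = a j) (hb : ∀ j < p, ∀ l < p, b (j + p * l) = b j)
    (hab : ∀ j < p, b j = a ((j + d) % p)) {i : ℕ} (hi : i < p ^ 2) :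
    b i = a ((i + d) % p ^ 2) := by
  obtain ⟨j, hj, l, hl, rfl⟩ := exists_add_mul_eq_of_lt_sq hi
  obtain ⟨j', hj', l', hl', hi'⟩ :=
    exists_add_mul_eq_of_lt_sq (Nat.mod_lt (j + p * l + d) (Nat.zero_lt_of_lt hi))
  have hj'eq : j' = (j + d) % p := by
    have := congrArg (· % p) hi'
    simp only [Nat.add_mul_mod_self_left, Nat.mod_eq_of_lt hj',
      Nat.mod_mod_of_dvd _ (dvd_pow_self p two_ne_zero)] at this
    rw [this, add_right_comm, Nat.add_mul_mod_self_left]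
  rw [hb j hj l hl, hab j hj, ← hi', ha j' hj' l' hl', hj'eq]

theorem exists_add_mod_of_colSum {p : ℕ} (hp : p.Prime) {a b : ℕ → ℕ} (ha : ∀ i < p ^ 2, a i ≤ 1)
    (hb : ∀ i < p ^ 2, b i ≤ 1)
    (ht : ∀ j < p, ∀ l < p, (b (j + p * l) : ℤ) - a (j + p * l) = b j - a j) {d : ℕ}
    (hd : ∀ j < p, colSum p b j = colSum p a ((j + d) % p)) :
    ∃ D, ∀ i < p ^ 2, b i = a ((i + D) % p ^ 2) := by
  have hlt : ∀ {j l}, j < p → l < p → j + p * l < p ^ 2 := fun hj hl => by nlinarith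
  have hcol := fun j hj => colSum_sub_colSum (ht j hj)
  by_cases hab : ∀ j < p, b j = a j
  · refine ⟨0, fun i hi => ?_⟩
    obtain ⟨j, hj, l, hl, rfl⟩ := exists_add_mul_eq_of_lt_sq hi
    have := ht j hj l hl
    rw [hab j hj, add_zero, Nat.mod_eq_of_lt hi] at *
    omega
  push Not at hab
  obtain ⟨j₀, hj₀, hne⟩ := hab
  have hpd : ¬ p ∣ d := by
    rintro ⟨c, rfl⟩
    have := hcol j₀ hj₀
    rw [hd j₀ hj₀, Nat.add_mul_mod_self_left, Nat.mod_eq_of_lt hj₀, sub_self] at this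
    have := (mul_eq_zero.1 this.symm).resolve_left (by exact_mod_cast hp.ne_zero)
    omega
  have hdvd₀ : p ∣ colSum p a j₀ := ⟨a j₀, colSum_eq_mul fun l hl =>
    apply_add_mul_eq_of_apply_ne (fun l hl => ha _ (hlt hj₀ hl)) (fun l hl => hb _ (hlt hj₀ hl))
      (ht j₀ hj₀) hne hl⟩
  have hinv : ∀ j < p, colSum p a ((j + d) % p) % p = colSum p a j % p := fun j hj => by
    rw [← hd j hj]
    exact (Nat.modEq_iff_dvd.2 ⟨_, hcol j hj⟩).symm
  have hdvd : ∀ j < p, p ∣ colSum p a j := fun j hj => by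
    have horbit := fun {j} =>
      hp.apply_eq_apply_zero_of_add_mod (g := (colSum p a · % p)) hpd hinv (j := j)
    rw [Nat.dvd_iff_mod_eq_zero, horbit hj, ← horbit hj₀]
    exact Nat.mod_eq_zero_of_dvd hdvd₀
  have hacol : ∀ j < p, ∀ l < p, a (j + p * l) = a j := fun j hj l hl => by
    simpa using apply_eq_of_dvd_sum (fun l hl => ha _ (hlt hj hl)) (hdvd j hj) hl
  have hbcol : ∀ j < p, ∀ l < p, b (j + p * l) = b j := fun j hj l hl => by
    simpa using apply_eq_of_dvd_sum (fun l hl => hb _ (hlt hj hl))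
      (by rw [← colSum, hd j hj]; exact hdvd _ (Nat.mod_lt _ hp.pos)) hl
  refine ⟨d, fun i hi => apply_eq_of_columns hacol hbcol (fun j hj => ?_) hi⟩
  have := hd j hj
  rw [colSum_eq_mul (hbcol j hj), colSum_eq_mul (hacol _ (Nat.mod_lt _ hp.pos))] at this
  exact Nat.eq_of_mul_eq_mul_left hp.pos this

theorem exists_add_mod_of_sum_pow_eq {K : Type*} [Field K] [CharZero K] {p : ℕ} (hp : p.Prime)
    {ω : K} (hω : IsPrimitiveRoot ω (p ^ 2)) {a b : ℕ → ℕ} (ha : ∀ i < p ^ 2, a i ≤ 1)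
    (hb : ∀ i < p ^ 2, b i ≤ 1) (hsum : ∑ i ∈ range (p ^ 2), a i = ∑ i ∈ range (p ^ 2), b i)
    (h₁ : ∑ i ∈ range (p ^ 2), (a i : K) * ω ^ i = ∑ i ∈ range (p ^ 2), (b i : K) * ω ^ i)
    {e : ℤ} (hₚ : ∑ i ∈ range (p ^ 2), (a i : K) * (ω ^ p) ^ i
      = ω ^ e * ∑ i ∈ range (p ^ 2), (b i : K) * (ω ^ p) ^ i) :
    ∃ D, ∀ i < p ^ 2, b i = a ((i + D) % p ^ 2) := by
  have ht : ∀ j < p, ∀ l < p, (b (j + p * l) : ℤ) - a (j + p * l) = b j - a j :=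
    fun j hj l hl => by
      simpa using hω.apply_add_pow_mul_eq_of_sum_eq_zero (k := 1) (t := fun i => (b i : ℤ) - a i)
        (j := j) hp (by simp [sub_mul, sum_sub_distrib, h₁]) (by rwa [pow_one]) hl
  have hζ : (ω ^ p) ^ p = 1 := by rw [← pow_mul, ← sq, hω.pow_eq_one]
  obtain ⟨d, hd⟩ := hω.exists_add_mod_of_sum_eq_zpow_mul_sum hp (x := fun j => colSum p a j)
    (y := fun j => colSum p b j)
    (by exact_mod_cast (sum_colSum p a).trans (hsum.trans (sum_colSum p b).symm))
    (by simpa [sum_mul_pow_eq_sum_colSum hζ] using hₚ)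
  exact exists_add_mod_of_colSum hp ha hb ht (fun j hj => by exact_mod_cast hd j hj)

theorem exists_add_mod_of_sum_pow_eq_zpow_mul {K : Type*} [Field K] [CharZero K] {p : ℕ}
    (hp : p.Prime) {ω : K} (hω : IsPrimitiveRoot ω (p ^ 2)) {a b : ℕ → ℕ}
    (ha : ∀ i < p ^ 2, a i ≤ 1) (hb : ∀ i < p ^ 2, b i ≤ 1)
    (hsum : ∑ i ∈ range (p ^ 2), a i = ∑ i ∈ range (p ^ 2), b i) {c₁ cₚ : ℤ}
    (h₁ : ∑ i ∈ range (p ^ 2), (a i : K) * ω ^ i = ω ^ c₁ * ∑ i ∈ range (p ^ 2), (b i : K) * ω ^ i)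
    (hₚ : ∑ i ∈ range (p ^ 2), (a i : K) * (ω ^ p) ^ i
      = ω ^ cₚ * ∑ i ∈ range (p ^ 2), (b i : K) * (ω ^ p) ^ i) :
    ∃ D, ∀ i < p ^ 2, b i = a ((i + D) % p ^ 2) := by
  have : NeZero (p ^ 2) := ⟨pow_ne_zero 2 hp.ne_zero⟩
  have hω0 : ω ≠ 0 := hω.ne_zero (NeZero.ne _)
  have hζ : (ω ^ p) ^ p ^ 2 = 1 := by rw [← pow_mul, mul_comm, pow_mul, hω.pow_eq_one, one_pow]
  obtain ⟨s, -, hs⟩ := hω.eq_pow_of_pow_eq_one (ξ := ω ^ c₁) (by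
    rw [← zpow_natCast, ← zpow_mul, mul_comm, zpow_mul, zpow_natCast, hω.pow_eq_one, one_zpow])
  have hshift : ∀ x : K, x ^ p ^ 2 = 1 → ∑ i ∈ range (p ^ 2), (a i : K) * x ^ i
      = x ^ s * ∑ i ∈ range (p ^ 2), (a ((i + s) % p ^ 2) : K) * x ^ i := fun x hx =>
    (pow_mul_sum_add_mod (NeZero.ne _) hx (fun i => (a i : K)) s).symm
  obtain ⟨D, hD⟩ := exists_add_mod_of_sum_pow_eq hp hω (a := fun i => a ((i + s) % p ^ 2))
    (fun i _ => ha _ (Nat.mod_lt _ (NeZero.pos _))) hb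
    (by rw [sum_range_add_mod a (NeZero.ne _), hsum])
    (mul_left_cancel₀ (pow_ne_zero s hω0) (by rw [← hshift ω hω.pow_eq_one, h₁, hs]))
    (e := cₚ - (p * s : ℕ)) (by
      rw [zpow_sub₀ hω0, zpow_natCast, pow_mul, div_mul_eq_mul_div,
        eq_div_iff (pow_ne_zero _ (pow_ne_zero _ hω0)), mul_comm, ← hshift _ hζ, hₚ])
  refine ⟨D + s, fun i hi => ?_⟩
  rw [hD i hi, Nat.mod_add_mod, add_assoc]

theorem stmt_4_general (p n : ℕ) (hp : p.Prime) (hn : n = p ^ 2)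
    (a b : ℕ → ℕ)
    (ha : ∀ i < n, a i = 0 ∨ a i = 1) (hb : ∀ i < n, b i = 0 ∨ b i = 1)
    (h : ∀ k < n, ∃ c : ℤ, expSum n a k = primRoot n ^ c * expSum n b k) :
    ∃ j : ℕ, ∀ i < n, b i = a ((i + j) % n) := by
  subst hn
  have hω : IsPrimitiveRoot (primRoot (p ^ 2)) (p ^ 2) :=
    Complex.isPrimitiveRoot_exp _ (pow_ne_zero 2 hp.ne_zero)
  have hexpSum : ∀ c k, expSum (p ^ 2) c k
      = ∑ i ∈ range (p ^ 2), (c i : ℂ) * (primRoot (p ^ 2) ^ k) ^ i := fun c k =>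
    sum_congr rfl fun i _ => by rw [← pow_mul, mul_comm k i]
  have hp2 : p < p ^ 2 := by nlinarith [hp.two_le]
  have hsum : ∑ i ∈ range (p ^ 2), a i = ∑ i ∈ range (p ^ 2), b i := by
    obtain ⟨c₀, h₀⟩ := h 0 (by omega)
    have := congrArg norm h₀
    simp only [hexpSum, pow_zero, one_pow, mul_one, norm_mul, norm_zpow,
      hω.norm'_eq_one (pow_ne_zero 2 hp.ne_zero), one_zpow, one_mul] at this
    exact_mod_cast this
  obtain ⟨c₁, h₁⟩ := h 1 (by have := hp.two_le; omega)
  obtain ⟨cₚ, hₚ⟩ := h p hp2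
  exact exists_add_mod_of_sum_pow_eq_zpow_mul hp hω
    (fun i hi => by rcases ha i hi with h | h <;> omega)
    (fun i hi => by rcases hb i hi with h | h <;> omega) hsum
    (by simpa [hexpSum] using h₁) (by simpa [hexpSum] using hₚ)

theorem stmt_4 (p n : ℕ) (hp : p.Prime) (hop : Odd p) (hn : n = p ^ 2)
    (a b : ℕ → ℕ)
    (ha : ∀ i < n, a i = 0 ∨ a i = 1) (hb : ∀ i < n, b i = 0 ∨ b i = 1)
    (h : ∀ k < n, ∃ c : ℤ, expSum n a k = primRoot n ^ c * expSum n b k) :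
    ∃ j : ℕ, ∀ i < n, b i = a ((i + j) % n) :=
  stmt_4_general p n hp hn a b ha hb h
end

section
/- There exists an absolute constant c₂ > 0 with the following property. Let n ≥ 2 and t ≥ 1 be integers, and for x ∈ {0,1}^n define Q_t(z; x) = Σ_{j=0}^{n−1} z^{tn} · P(z; x^{(j)})^t · P(z^{−t}; x^{(j)}), which is a polynomial in z of degree at most (t+1)n. If x, x' ∈ {0,1}^n satisfy Q_t(·; x) ≠ Q_t(·; x') as polynomials in z, then for every real L ≥ 2 there exists z ∈ ℂ with |z| = 1 and |arg z| ≤ 1/L such that |Q_t(z; x) − Q_t(z; x')| ≥ n^{−c₂ t L}. -/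
/-!
The difference `Q_t(·; x) - Q_t(·; x')` is a nonzero integer polynomial `D`, and `|D| ≤ n^{t+3}` on
the unit circle. For a prime `p > deg D + 1`, the product of `D(η)` over the primitive `p`-th roots of
unity `η` is the resultant of `Φ_p` and `D`, a nonzero integer, so it has modulus at least `1`. At
least `p / (14 L)` of these roots lie on the arc `|arg η| ≤ 1/L`; bounding all the other factors by
`n^{t+3}` shows that the largest value of `|D|` on the arc is at least `n^{-14 (t+3) L}`, whatever `p`.
-/

/-- `PP n z x = Σ_{i=1}^{n} x_i z^i` for the string `x` (0-indexed: bit `i` of the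
string is `x i` for `0 ≤ i < n`, corresponding to `x_{i+1}`). -/
noncomputable def PP (n : ℕ) (z : ℂ) (x : ℕ → Bool) : ℂ :=
  ∑ i ∈ Finset.range n, (if x i then 1 else 0) * z ^ (i + 1)

/-- The cyclic shift `x^{(j)}`: `x^{(j)}_i = x_{(i+j) mod n}`. -/
def cyclicShift (n : ℕ) (x : ℕ → Bool) (j : ℕ) : ℕ → Bool :=
  fun i => x ((i + j) % n)

/-- `QQ n t z x = Σ_{j=0}^{n−1} z^{tn} · P(z; x^{(j)})^t · P(z^{−t}; x^{(j)})`. -/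
noncomputable def QQ (n t : ℕ) (z : ℂ) (x : ℕ → Bool) : ℂ :=
  ∑ j ∈ Finset.range n,
    z ^ (t * n) * PP n z (cyclicShift n x j) ^ t * PP n (z⁻¹ ^ t) (cyclicShift n x j)

open Polynomial Real Finset

theorem one_le_prod_norm_aeval_primitiveRoots (N : ℕ) [NeZero N] {q : ℤ[X]} (hq : q ≠ 0)
    (hdeg : q.natDegree < N.totient) :
    1 ≤ ∏ η ∈ primitiveRoots N ℂ, ‖aeval η q‖ := by
  set r := resultant (cyclotomic N ℤ) q N.totient q.natDegree
  have hinj := RingHom.injective_int (Int.castRingHom ℚ)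
  have hcop : IsCoprime (cyclotomic N ℚ) (q.map (Int.castRingHom ℚ)) := by
    refine (cyclotomic.irreducible_rat (NeZero.pos N)).coprime_iff_not_dvd.mpr fun hdvd => ?_
    have := natDegree_le_of_dvd hdvd ((Polynomial.map_ne_zero_iff hinj).mpr hq)
    rw [natDegree_cyclotomic, natDegree_map_eq_of_injective hinj] at this
    omega
  have hr : r ≠ 0 := by
    have := resultant_ne_zero _ _ hcop
    rw [natDegree_cyclotomic, natDegree_map_eq_of_injective hinj,
      ← map_cyclotomic N (Int.castRingHom ℚ), resultant_map_map] at this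
    exact (map_ne_zero_iff _ hinj).mp this
  have hprod : (r : ℂ) = ∏ η ∈ primitiveRoots N ℂ, aeval η q := by
    have h := resultant_eq_prod_eval (cyclotomic N ℂ) (q.map (Int.castRingHom ℂ)) q.natDegree
      natDegree_map_le (IsAlgClosed.splits _)
    rw [cyclotomic.roots_eq_primitiveRoots_val, (cyclotomic.monic N ℂ).leadingCoeff, one_pow,
      one_mul, natDegree_cyclotomic, ← map_cyclotomic N (Int.castRingHom ℂ),
      resultant_map_map] at h
    simpa [eval_map, aeval_def, algebraMap_int_eq] using h
  calc (1 : ℝ) ≤ ‖(r : ℂ)‖ := by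
        rw [Complex.norm_intCast]; exact_mod_cast Int.one_le_abs hr
    _ = _ := by rw [hprod, norm_prod]

theorem floor_le_card_filter_primitiveRoots_abs_arg_le {p : ℕ} (hp : p.Prime) {δ : ℝ}
    (hδ : δ ≤ π) :
    ⌊δ * p / (2 * π)⌋₊ ≤ #{η ∈ primitiveRoots p ℂ | |Complex.arg η| ≤ δ} := by
  set ζ := Complex.exp (2 * π * Complex.I / p)
  have hζ : IsPrimitiveRoot ζ p := Complex.isPrimitiveRoot_exp p hp.ne_zero
  have hp0 : (0 : ℝ) < p := by exact_mod_cast hp.pos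
  have hpow : ∀ k : ℕ, ζ ^ k = Complex.exp (↑(2 * π * k / p) * Complex.I) := by
    intro k
    rw [← Complex.exp_nat_mul]
    congr 1
    push_cast
    field_simp
  have hangle : ∀ k ∈ Icc 1 ⌊δ * p / (2 * π)⌋₊,
      0 < 2 * π * k / p ∧ 2 * π * k / p ≤ δ ∧ 0 < k ∧ k < p := by
    intro k hk
    obtain ⟨hk1, hkK⟩ := mem_Icc.mp hk
    have hkδ := (Nat.le_floor_iff' (by omega)).mp hkK
    rw [le_div_iff₀ (by positivity)] at hkδ
    have hk1' : (1 : ℝ) ≤ k := by exact_mod_cast hk1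
    refine ⟨by positivity, by rw [div_le_iff₀ hp0]; linarith, hk1, ?_⟩
    have : (k : ℝ) < p := by nlinarith [pi_pos]
    exact_mod_cast this
  calc ⌊δ * p / (2 * π)⌋₊ = #(Icc 1 ⌊δ * p / (2 * π)⌋₊) := by simp
    _ ≤ _ := by
      refine card_le_card_of_injOn (ζ ^ ·) (fun k hk => ?_) (fun i hi j hj hij => ?_)
      · obtain ⟨hθ, hθδ, hk0, hkp⟩ := hangle k hk
        simp only [coe_filter, Set.mem_ofPred_eq, mem_primitiveRoots hp.pos]
        refine ⟨hζ.pow_of_coprime k (Nat.coprime_of_lt_prime hk0.ne' hkp hp).symm, ?_⟩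
        rw [hpow, Complex.exp_mul_I,
          Complex.arg_cos_add_sin_mul_I ⟨by linarith [pi_pos], hθδ.trans hδ⟩, abs_of_pos hθ]
        exact hθδ
      · exact hζ.pow_inj (hangle i hi).2.2.2 (hangle j hj).2.2.2 hij

theorem exists_one_le_pow_card_mul_pow_card {ι : Type*} [DecidableEq ι] {S T : Finset ι}
    (hST : S ⊆ T) (hS : S.Nonempty) {f : ι → ℝ} (hf : ∀ i ∈ T, 0 ≤ f i) {M : ℝ} (hM : 1 ≤ M)
    (hfM : ∀ i ∈ T, f i ≤ M) (hprod : 1 ≤ ∏ i ∈ T, f i) :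
    ∃ i ∈ S, 1 ≤ M ^ #T * f i ^ #S := by
  obtain ⟨i, hi, hmax⟩ := S.exists_max_image f hS
  have hfS : ∀ j ∈ S, 0 ≤ f j := fun j hj => hf j (hST hj)
  refine ⟨i, hi, hprod.trans ?_⟩
  rw [← prod_sdiff hST]
  gcongr ?_ * ?_
  · exact prod_nonneg hfS
  · calc ∏ j ∈ T \ S, f j ≤ ∏ _j ∈ T \ S, M :=
          prod_le_prod (fun j hj => hf j (mem_sdiff.mp hj).1) fun j hj => hfM j (mem_sdiff.mp hj).1
      _ = M ^ #(T \ S) := prod_const M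
      _ ≤ M ^ #T := pow_le_pow_right₀ hM (card_le_card sdiff_subset)
  · exact (prod_le_prod hfS hmax).trans_eq (prod_const _)

theorem exists_abs_arg_le_and_rpow_le_norm_aeval {q : ℤ[X]} (hq : q ≠ 0) {M : ℝ} (hM : 1 ≤ M)
    (hqM : ∀ z : ℂ, ‖z‖ = 1 → ‖aeval z q‖ ≤ M) {L : ℝ} (hL : 1 ≤ L) :
    ∃ z : ℂ, ‖z‖ = 1 ∧ |Complex.arg z| ≤ 1 / L ∧ M ^ (-(14 * L)) ≤ ‖aeval z q‖ := by
  obtain ⟨p, hpq, hp⟩ := Nat.exists_infinite_primes (q.natDegree + ⌈14 * L⌉₊ + 2)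
  have : NeZero p := ⟨hp.ne_zero⟩
  have hpL : 14 * L ≤ p := (Nat.le_ceil _).trans (by exact_mod_cast (by omega : ⌈14 * L⌉₊ ≤ p))
  set T := primitiveRoots p ℂ
  set S := {η ∈ T | |Complex.arg η| ≤ 1 / L}
  have hnorm : ∀ η ∈ T, ‖η‖ = 1 := fun η hη =>
    ((mem_primitiveRoots hp.pos).mp hη).norm'_eq_one hp.ne_zero
  have hT : #T ≤ p :=
    ((Complex.isPrimitiveRoot_exp p hp.ne_zero).card_primitiveRoots).trans_le (Nat.totient_le p)
  have hS : p / (14 * L) ≤ #S := by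
    have hfloor : (⌊1 / L * p / (2 * π)⌋₊ : ℝ) ≤ #S := by
      exact_mod_cast floor_le_card_filter_primitiveRoots_abs_arg_le hp
        ((div_le_one₀ (by linarith)).mpr hL |>.trans (by linarith [pi_gt_three]))
    have h7 : p / (7 * L) ≤ 1 / L * p / (2 * π) := by
      rw [one_div_mul_eq_div, div_div, mul_comm 7]
      gcongr
      linarith [pi_lt_d2]
    have h14 : 1 ≤ p / (14 * L) := (one_le_div (by positivity)).mpr hpL
    have : p / (7 * L) = 2 * (p / (14 * L)) := by field_simp; ring
    linarith [Nat.lt_floor_add_one (1 / L * p / (2 * π))]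
  have hSne : S.Nonempty := by
    rw [← card_pos, ← Nat.cast_pos (α := ℝ)]
    exact (one_le_div (by positivity)).mpr hpL |>.trans_lt' one_pos |>.trans_le hS
  have hprod := one_le_prod_norm_aeval_primitiveRoots p hq (by rw [Nat.totient_prime hp]; omega)
  obtain ⟨η, hηS, hη⟩ := exists_one_le_pow_card_mul_pow_card (filter_subset _ T) hSne
    (fun _ _ => norm_nonneg _) hM (fun η hη => hqM η (hnorm η hη)) hprod
  obtain ⟨hηT, harg⟩ := mem_filter.mp hηS
  refine ⟨η, hnorm η hηT, harg, ?_⟩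
  by_contra! hlt
  have hM0 : 0 < M := by linarith
  have : M ^ #T * ‖aeval η q‖ ^ #S < 1 := calc
    _ < M ^ (p : ℝ) * (M ^ (-(14 * L))) ^ #S := by
      rw [Real.rpow_natCast]
      exact mul_lt_mul' (pow_le_pow_right₀ hM hT)
        (pow_lt_pow_left₀ hlt (norm_nonneg _) hSne.card_pos.ne') (by positivity) (by positivity)
    _ = M ^ ((p : ℝ) + -(14 * L) * #S) := by
      rw [← Real.rpow_mul_natCast hM0.le, Real.rpow_add hM0]
    _ ≤ M ^ (0 : ℝ) := by
      refine Real.rpow_le_rpow_of_exponent_le hM ?_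
      rw [div_le_iff₀ (by positivity)] at hS
      linarith
    _ = 1 := Real.rpow_zero M
  linarith

lemma norm_PP_le (n : ℕ) (w : ℕ → Bool) {z : ℂ} (hz : ‖z‖ ≤ 1) : ‖PP n z w‖ ≤ n := by
  calc ‖PP n z w‖ ≤ ∑ _i ∈ range n, (1 : ℝ) := by
        refine norm_sum_le_of_le _ fun i _ => ?_
        rw [norm_mul, norm_pow]
        split_ifs <;> simp [pow_le_one₀ (norm_nonneg z) hz]
    _ = n := by simp

lemma norm_QQ_le (n t : ℕ) (x : ℕ → Bool) {z : ℂ} (hz : ‖z‖ = 1) :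
    ‖QQ n t z x‖ ≤ (n : ℝ) ^ (t + 2) := by
  have hzt : ‖z⁻¹ ^ t‖ ≤ 1 := by simp [hz]
  calc ‖QQ n t z x‖ ≤ ∑ _j ∈ range n, (n : ℝ) ^ t * n := by
        refine norm_sum_le_of_le _ fun j _ => ?_
        rw [norm_mul, norm_mul, norm_pow, norm_pow, hz, one_pow, one_mul]
        gcongr
        · exact norm_PP_le n _ hz.le
        · exact norm_PP_le n _ hzt
    _ = (n : ℝ) ^ (t + 2) := by simp; ring

lemma norm_QQ_sub_QQ_le {n : ℕ} (hn : 2 ≤ n) (t : ℕ) (x x' : ℕ → Bool) {z : ℂ} (hz : ‖z‖ = 1) :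
    ‖QQ n t z x - QQ n t z x'‖ ≤ (n : ℝ) ^ (t + 3) := by
  have hn' : (2 : ℝ) ≤ n := by exact_mod_cast hn
  calc _ ≤ ‖QQ n t z x‖ + ‖QQ n t z x'‖ := norm_sub_le _ _
    _ ≤ (n : ℝ) ^ (t + 2) * 2 := by linarith [norm_QQ_le n t x hz, norm_QQ_le n t x' hz]
    _ ≤ (n : ℝ) ^ (t + 3) := by rw [pow_succ _ (t + 2)]; gcongr

noncomputable def Ppoly (n : ℕ) (w : ℕ → Bool) : ℤ[X] :=
  ∑ i ∈ range n, (if w i then 1 else 0) * X ^ (i + 1)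

noncomputable def Rpoly (n t : ℕ) (w : ℕ → Bool) : ℤ[X] :=
  ∑ i ∈ range n, (if w i then 1 else 0) * X ^ (t * (n - 1 - i))

noncomputable def Qpoly (n t : ℕ) (x : ℕ → Bool) : ℤ[X] :=
  ∑ j ∈ range n, Rpoly n t (cyclicShift n x j) * Ppoly n (cyclicShift n x j) ^ t

lemma aeval_Ppoly (n : ℕ) (w : ℕ → Bool) (z : ℂ) : aeval z (Ppoly n w) = PP n z w := by
  simp [Ppoly, PP, apply_ite]

lemma aeval_Rpoly (n t : ℕ) (w : ℕ → Bool) {z : ℂ} (hz : z ≠ 0) :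
    aeval z (Rpoly n t w) = z ^ (t * n) * PP n (z⁻¹ ^ t) w := by
  rw [Rpoly, PP, map_sum, mul_sum]
  refine sum_congr rfl fun i hi => ?_
  have hexp : t * n = t * (n - 1 - i) + t * (i + 1) := by
    rw [← Nat.mul_add]; congr 1; have := mem_range.mp hi; omega
  rw [hexp, pow_add, ← pow_mul, inv_pow]
  split_ifs <;> simp [hz]

lemma aeval_Qpoly (n t : ℕ) (x : ℕ → Bool) {z : ℂ} (hz : z ≠ 0) :
    aeval z (Qpoly n t x) = QQ n t z x := by
  rw [Qpoly, QQ, map_sum]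
  refine sum_congr rfl fun j _ => ?_
  rw [map_mul, map_pow, aeval_Ppoly, aeval_Rpoly n t _ hz]
  ring

theorem stmt_10 :
    ∃ c₂ : ℝ, 0 < c₂ ∧
      ∀ n t : ℕ, 2 ≤ n → 1 ≤ t → ∀ x x' : ℕ → Bool,
        -- `Q_t(·; x) ≠ Q_t(·; x')` as polynomials in `z`
        (∃ z : ℂ, z ≠ 0 ∧ QQ n t z x ≠ QQ n t z x') →
        ∀ L : ℝ, 2 ≤ L →
          ∃ z : ℂ, ‖z‖ = 1 ∧ |Complex.arg z| ≤ 1 / L ∧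
            (n : ℝ) ^ (-(c₂ * t * L)) ≤ ‖QQ n t z x - QQ n t z x'‖ := by
  refine ⟨56, by norm_num, fun n t hn ht x x' ⟨z₀, hz₀, hne⟩ L hL => ?_⟩
  set D := Qpoly n t x - Qpoly n t x'
  have hunit : ∀ z : ℂ, ‖z‖ = 1 → z ≠ 0 := fun z hz => ne_zero_of_norm_ne_zero (by simp [hz])
  have hD : ∀ z : ℂ, z ≠ 0 → aeval z D = QQ n t z x - QQ n t z x' := fun z hz => by
    rw [map_sub, aeval_Qpoly n t x hz, aeval_Qpoly n t x' hz]
  have hD0 : D ≠ 0 := fun h => hne (sub_eq_zero.mp (by rw [← hD z₀ hz₀, h, map_zero]))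
  have hDM : ∀ z : ℂ, ‖z‖ = 1 → ‖aeval z D‖ ≤ (n : ℝ) ^ (t + 3) := fun z hz => by
    rw [hD z (hunit z hz)]
    exact norm_QQ_sub_QQ_le hn t x x' hz
  have hn1 : (1 : ℝ) ≤ n := by exact_mod_cast (by omega : 1 ≤ n)
  obtain ⟨z, hz, harg, hzD⟩ :=
    exists_abs_arg_le_and_rpow_le_norm_aeval hD0 (one_le_pow₀ hn1) hDM (by linarith)
  rw [hD z (hunit z hz), ← Real.rpow_natCast, ← Real.rpow_mul (by positivity)] at hzD
  refine ⟨z, hz, harg, le_trans (Real.rpow_le_rpow_of_exponent_le hn1 ?_) hzD⟩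
  have ht' : (1 : ℝ) ≤ t := by exact_mod_cast ht
  push_cast
  nlinarith
end

section
/- Let n ≥ 1, let q ∈ (0,1) be the deletion probability and p = 1−q the retention probability. There exists an absolute constant C > 0 such that for every integer m ≥ 1 and every tuple Z = (z_1, …, z_m) of nonzero complex numbers, there exists a function g_m (from pairs consisting of a binary string and the tuple Z to ℂ, depending on n, p, m, Z but not on x) such that for every x ∈ {0,1}^n, the expectation over a trace x̃ of x through the deletion channel with deletion probability q satisfies E[g_m(x̃, Z)] = Π_{k=1}^m (Σ_{i=1}^n x_i z_k^i). Moreover, for every real L ≥ 1 and every Z with |z_1| = ⋯ = |z_m| = 1 and |arg z_i| ≤ 1/L for all i, the bound |g_m(x̃, Z)| ≤ (p^{−1} m n)^{C·m} · e^{C·m²n/(p²L²)} holds for every binary string x̃ of length at most n. -/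
/-- The probability of a given deletion pattern: each bit with `m i = true` is retained
(probability `1 - q`) and each bit with `m i = false` is deleted (probability `q`). -/
noncomputable def maskProb (q : ℝ) {n : ℕ} (m : Fin n → Bool) : ℝ :=
  ∏ i : Fin n, if m i then (1 - q) else q

/-- The trace of the length-`n` string `x` under the deletion pattern `m`:
the retained bits concatenated in order. -/
def applyMask {n : ℕ} (x : ℕ → Bool) (m : Fin n → Bool) : List Bool :=
  ((List.finRange n).filter (fun i => m i)).map (fun i => x i.val)

/-!
Write `p = 1 - q`. Expanding `∏ₖ ∑ᵢ xᵢ zₖ ^ i` according to which of the `m` indices coincide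
gives, for each ordered set partition of `{1, …, m}` with block products `v₁, …, v_t`, the sum
`∑_{i₁ < ⋯ < i_t} ∏ₛ x_{iₛ} vₛ ^ iₛ`. In terms of the gaps between consecutive indices its weights
are the suffix products `uₛ = vₛ ⋯ v_t`, and passing to a trace turns a gap weight `w` into
`1 - p + p w` on average. So evaluating the same gap sum on the trace, with each `uₛ` replaced by
`(uₛ - (1 - p)) / p` and a factor `p⁻ᵗ`, is unbiased.

If every `zₖ` lies on the unit circle with `|arg zₖ| ≤ 1 / L`, so does every `uₛ`, with
`‖1 - uₛ‖ ≤ m / L`, whence `‖(uₛ - (1 - p)) / p‖ ≤ exp (m² / (2 p² L²))`. With at most `m ^ (2m)`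
partitions and at most `n ^ t` index tuples per partition this gives the bound.
-/

section Algebra

variable {R : Type*} [CommRing R]

/-- `p` is the probability that a bit is retained. -/
def traceExpect (p : R) : List Bool → (List Bool → R) → R
  | [], g => g []
  | b :: x, g => (1 - p) * traceExpect p x g + p * traceExpect p x (fun y => g (b :: y))

theorem traceExpect_add (p : R) (x : List Bool) (g h : List Bool → R) :
    traceExpect p x (fun y => g y + h y) = traceExpect p x g + traceExpect p x h := by
  induction x generalizing g h with
  | nil => rfl
  | cons b x ih => simp only [traceExpect, ih]; ring

theorem traceExpect_const_mul (p : R) (x : List Bool) (c : R) (g : List Bool → R) :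
    traceExpect p x (fun y => c * g y) = c * traceExpect p x g := by
  induction x generalizing g with
  | nil => rfl
  | cons b x ih => simp only [traceExpect, ih]; ring

theorem traceExpect_list_sum {ι : Type*} (p : R) (x : List Bool) (l : List ι)
    (f : ι → List Bool → R) :
    traceExpect p x (fun y => (l.map fun i => f i y).sum) =
      (l.map fun i => traceExpect p x (f i)).sum := by
  induction l with
  | nil => simpa using traceExpect_const_mul p x 0 fun _ => 0
  | cons i l ih => simp only [List.map_cons, List.sum_cons, traceExpect_add, ih]

/-- `gapSum [w₁, …, w_t] [c₁, …, c_ℓ] = ∑_{i₁ < ⋯ < i_t} ∏ₛ c_{iₛ} wₛ ^ (iₛ - iₛ₋₁ - 1)`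
(positions `1, …, ℓ`, `i₀ = 0`): a position skipped before the `s`-th chosen one weighs `wₛ`. -/
def gapSum : List R → List R → R
  | [], _ => 1
  | _ :: _, [] => 0
  | w :: ws, c :: cs => c * gapSum ws cs + w * gapSum (w :: ws) cs

/-- A bit of `x` inside a gap is either deleted or retained and skipped, so the gap weight `w`
becomes `1 - p + p w`; a chosen bit must be retained. -/
theorem traceExpect_gapSum (p : R) (β : Bool → R) (x : List Bool) (ws : List R) :
    traceExpect p x (fun y => gapSum ws (y.map β)) =
      gapSum (ws.map fun w => 1 - p + p * w) (x.map fun b => p * β b) := by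
  induction x generalizing ws with
  | nil => cases ws <;> rfl
  | cons b x ih =>
    cases ws with
    | nil =>
      have h : traceExpect p x (fun _ => (1 : R)) = 1 := by simpa [gapSum] using ih []
      simp only [traceExpect, List.map_nil, gapSum, h]
      ring
    | cons w ws =>
      simp only [traceExpect, List.map_cons, gapSum, traceExpect_add, traceExpect_const_mul, ih]
      ring

theorem gapSum_map_const_mul (c : R) (ws cs : List R) :
    gapSum ws (cs.map (c * ·)) = c ^ ws.length * gapSum ws cs := by
  induction cs generalizing ws with
  | nil => cases ws <;> simp [gapSum]
  | cons a cs ih =>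
    cases ws with
    | nil => simp [gapSum]
    | cons w ws => simp only [List.map_cons, gapSum, ih, List.length_cons]; ring

/-- `tupleSum [v₁, …, v_t] x = ∑_{i₁ < ⋯ < i_t} ∏ₛ x_{iₛ} vₛ ^ iₛ`, positions `1, …, |x|`. -/
def tupleSum : List R → List Bool → R
  | [], _ => 1
  | _ :: _, [] => 0
  | v :: vs, b :: x => (v :: vs).prod * ((if b then tupleSum vs x else 0) + tupleSum (v :: vs) x)

def suffixProds : List R → List R
  | [] => []
  | v :: vs => (v :: vs).prod :: suffixProds vs

theorem length_suffixProds (vs : List R) : (suffixProds vs).length = vs.length := by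
  induction vs with
  | nil => rfl
  | cons v vs ih => simp [suffixProds, ih]

theorem tupleSum_eq_gapSum (vs : List R) (x : List Bool) :
    tupleSum vs x =
      (suffixProds vs).prod * gapSum (suffixProds vs) (x.map fun b => (b.toNat : R)) := by
  induction x generalizing vs with
  | nil => cases vs <;> simp [tupleSum, suffixProds, gapSum]
  | cons b x ih =>
    cases vs with
    | nil => simp [tupleSum, suffixProds, gapSum]
    | cons v vs =>
      simp only [tupleSum, suffixProds, List.map_cons, gapSum, List.prod_cons, ih]
      cases b <;> simp only [Bool.false_eq_true, ↓reduceIte, Bool.toNat_false, Bool.toNat_true,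
        Nat.cast_zero, Nat.cast_one, zero_add, zero_mul, one_mul] <;> ring

/-- The ways to add an index of weight `z` to an increasing tuple of indices with weights `vs`:
as a new smallest index, equal to the smallest index (weights multiply), or above it. -/
def insertions (z : R) : List R → List (List R)
  | [] => [[z]]
  | v :: vs => (z :: v :: vs) :: (z * v :: vs) :: (insertions z vs).map (v :: ·)

/-- The lists of block products `∏_{k ∈ B} z_k`, one for each ordered set partition
`(B₁, …, B_t)` of the indices of `zs`. -/
def partitionProds : List R → List (List R)
  | [] => [[]]
  | z :: zs => (partitionProds zs).flatMap (insertions z)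

theorem prod_of_mem_insertions {z : R} {vs u : List R} (hu : u ∈ insertions z vs) :
    u.prod = z * vs.prod := by
  induction vs generalizing u with
  | nil => simp_all [insertions]
  | cons v vs ih =>
    simp only [insertions, List.mem_cons, List.mem_map] at hu
    rcases hu with rfl | rfl | ⟨u, hu, rfl⟩
    · rfl
    · simp [mul_assoc]
    · rw [List.prod_cons, ih hu, List.prod_cons]; ring

theorem tupleSum_singleton_mul (z : R) (x : List Bool) (vs : List R) :
    tupleSum [z] x * tupleSum vs x = ((insertions z vs).map fun u => tupleSum u x).sum := by
  induction x generalizing vs with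
  | nil => cases vs <;> simp [tupleSum, insertions, Function.comp_def]
  | cons b x ih =>
    rcases vs with _ | ⟨v, vs⟩
    · simp [tupleSum, insertions]
    have hlater : ((insertions z vs).map fun u => tupleSum (v :: u) (b :: x)).sum =
        z * (v :: vs).prod * ((if b then tupleSum [z] x * tupleSum vs x else 0) +
          ((insertions z vs).map fun u => tupleSum (v :: u) x).sum) := by
      rw [List.map_congr_left fun u hu => by
        rw [tupleSum, List.prod_cons, prod_of_mem_insertions hu],
        List.sum_map_mul_left, List.sum_map_add, ih vs]
      cases b <;> simp only [Bool.false_eq_true, ↓reduceIte, List.map_const', List.sum_replicate,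
        nsmul_zero, zero_add, List.prod_cons] <;> ring
    have hcons := ih (v :: vs)
    simp only [insertions, List.map_cons, List.sum_cons, List.map_map, Function.comp_def]
      at hcons ⊢
    rw [hlater]
    cases b <;> simp only [tupleSum, List.prod_cons, List.prod_nil, mul_one, Bool.false_eq_true,
      ↓reduceIte, zero_add] <;> linear_combination (z * (v * vs.prod)) * hcons

theorem prod_tupleSum_singleton (x : List Bool) (zs : List R) :
    (zs.map fun z => tupleSum [z] x).prod =
      ((partitionProds zs).map fun vs => tupleSum vs x).sum := by
  induction zs with
  | nil => simp [partitionProds, tupleSum]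
  | cons z zs ih =>
    simp only [List.map_cons, List.prod_cons, ih, partitionProds, List.flatMap, List.map_flatten,
      List.sum_flatten, ← List.sum_map_mul_left, List.map_map, Function.comp_def,
      tupleSum_singleton_mul]

theorem length_insertions (z : R) (vs : List R) :
    (insertions z vs).length = 2 * vs.length + 1 := by
  induction vs with
  | nil => rfl
  | cons v vs ih => simp only [insertions, List.length_cons, List.length_map, ih]; omega

theorem length_le_of_mem_insertions {z : R} {vs u : List R} (hu : u ∈ insertions z vs) :
    u.length ≤ vs.length + 1 := by
  induction vs generalizing u with
  | nil => simp_all [insertions]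
  | cons v vs ih =>
    simp only [insertions, List.mem_cons, List.mem_map] at hu
    rcases hu with rfl | rfl | ⟨u, hu, rfl⟩
    · simp
    · simp
    · simpa using ih hu

theorem length_le_of_mem_partitionProds {zs vs : List R} (hvs : vs ∈ partitionProds zs) :
    vs.length ≤ zs.length := by
  induction zs generalizing vs with
  | nil => simp_all [partitionProds]
  | cons z zs ih =>
    obtain ⟨u, hu, hvs⟩ := List.mem_flatMap.1 hvs
    simpa using (length_le_of_mem_insertions hvs).trans (Nat.succ_le_succ (ih hu))

theorem length_partitionProds_le (zs : List R) :
    (partitionProds zs).length ≤ zs.length ^ (2 * zs.length) := by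
  induction zs with
  | nil => rfl
  | cons z zs ih =>
    have hle : ∀ l ∈ (partitionProds zs).map fun vs => (insertions z vs).length,
        l ≤ 2 * zs.length + 1 := fun _ h => by
      obtain ⟨vs, hvs, rfl⟩ := List.mem_map.1 h
      rw [length_insertions]
      have := length_le_of_mem_partitionProds hvs
      omega
    calc (partitionProds (z :: zs)).length
        = ((partitionProds zs).map fun vs => (insertions z vs).length).sum := by
          simp [partitionProds, List.length_flatMap]
      _ ≤ (partitionProds zs).length * (2 * zs.length + 1) := by
          simpa using List.sum_le_card_nsmul _ _ hle
      _ ≤ (zs.length + 1) ^ (2 * zs.length) * (zs.length + 1) ^ 2 := by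
          gcongr
          · exact ih.trans (Nat.pow_le_pow_left zs.length.le_succ _)
          · nlinarith
      _ = (z :: zs).length ^ (2 * (z :: zs).length) := by
          rw [List.length_cons, ← pow_add]; ring

theorem tupleSum_singleton_ofFn (z : R) (x : ℕ → Bool) (n : ℕ) :
    tupleSum [z] (List.ofFn fun i : Fin n => x i) =
      ∑ i ∈ Finset.range n, (if x i then 1 else 0 : R) * z ^ (i + 1) := by
  induction n generalizing x with
  | zero => rfl
  | succ n ih =>
    simp only [List.ofFn_succ, Fin.val_zero, Fin.val_succ, tupleSum, List.prod_singleton,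
      ih fun i => x (i + 1), Finset.sum_range_succ' _ n]
    rw [mul_add, Finset.mul_sum, add_comm]
    congr 1
    · exact Finset.sum_congr rfl fun i _ => by ring
    · ring

end Algebra

section Estimator

variable {K : Type*} [Field K]

/-- By `traceExpect_gapSum`, over a trace the gap weights `(u - (1 - p)) / p` average to the
suffix products `u`, and the chosen bits contribute `p ^ vs.length`. -/
def estimatorTerm (p : K) (vs : List K) (y : List Bool) : K :=
  (suffixProds vs).prod * p⁻¹ ^ vs.length *
    gapSum ((suffixProds vs).map fun u => (u - (1 - p)) / p) (y.map fun b => (b.toNat : K))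

def traceEstimator (p : K) (zs : List K) (y : List Bool) : K :=
  ((partitionProds zs).map fun vs => estimatorTerm p vs y).sum

theorem traceExpect_estimatorTerm {p : K} (hp : p ≠ 0) (vs : List K) (x : List Bool) :
    traceExpect p x (estimatorTerm p vs) = tupleSum vs x := by
  have hweights : ((suffixProds vs).map fun u => (u - (1 - p)) / p).map
      (fun w => 1 - p + p * w) = suffixProds vs := by
    rw [List.map_map]
    refine (List.map_congr_left fun u _ => ?_).trans (List.map_id _)
    simp only [Function.comp_apply, id]
    field_simp
    ring
  have hbits : (x.map fun b => p * (b.toNat : K)) = (x.map fun b => (b.toNat : K)).map (p * ·) :=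
    (List.map_map ..).symm
  unfold estimatorTerm
  rw [traceExpect_const_mul, traceExpect_gapSum, hweights, hbits,
    gapSum_map_const_mul, length_suffixProds, tupleSum_eq_gapSum, inv_pow]
  field_simp

theorem traceExpect_traceEstimator {p : K} (hp : p ≠ 0) (zs : List K) (x : List Bool) :
    traceExpect p x (traceEstimator p zs) = (zs.map fun z => tupleSum [z] x).prod := by
  unfold traceEstimator
  simp only [traceExpect_list_sum, traceExpect_estimatorTerm hp, prod_tupleSum_singleton]

end Estimator

theorem maskProb_cons (q : ℝ) {n : ℕ} (b : Bool) (mask : Fin n → Bool) :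
    maskProb q (Fin.cons b mask : Fin (n + 1) → Bool) =
      (if b then 1 - q else q) * maskProb q mask := by
  simp only [maskProb, Fin.prod_univ_succ, Fin.cons_zero, Fin.cons_succ]

theorem applyMask_cons {n : ℕ} (x : ℕ → Bool) (b : Bool) (mask : Fin n → Bool) :
    applyMask x (Fin.cons b mask : Fin (n + 1) → Bool) =
      (if b then [x 0] else []) ++ applyMask (fun i => x (i + 1)) mask := by
  cases b <;> simp [applyMask, List.finRange_succ, List.filter_map, Function.comp_def]

theorem sum_maskProb_mul_eq_traceExpect (q : ℝ) (n : ℕ) (x : ℕ → Bool) (g : List Bool → ℂ) :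
    ∑ mask : Fin n → Bool, (maskProb q mask : ℂ) * g (applyMask x mask) =
      traceExpect ((1 - q : ℝ) : ℂ) (List.ofFn fun i : Fin n => x i) g := by
  induction n generalizing x g with
  | zero => simp [maskProb, applyMask, traceExpect]
  | succ n ih =>
    rw [← (Fin.consEquiv fun _ => Bool).sum_comp, Fintype.sum_prod_type, Fintype.sum_bool]
    simp only [Fin.consEquiv, Equiv.coe_fn_mk, maskProb_cons, applyMask_cons, List.ofFn_succ,
      traceExpect, Fin.val_zero, Fin.val_succ, ← ih fun i => x (i + 1), Finset.mul_sum,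
      Bool.false_eq_true, ↓reduceIte, List.cons_append, List.nil_append]
    rw [add_comm]
    congr 1 <;> refine Finset.sum_congr rfl fun mask _ => ?_ <;> push_cast <;> ring

theorem norm_gapSum_le {R : Type*} [NormedCommRing R] [NormOneClass R] {M : ℝ} (hM : 1 ≤ M)
    {ws cs : List R} (hws : ∀ w ∈ ws, ‖w‖ ≤ M) (hcs : ∀ c ∈ cs, ‖c‖ ≤ 1) :
    ‖gapSum ws cs‖ ≤ cs.length.choose ws.length * M ^ cs.length := by
  induction cs generalizing ws with
  | nil => cases ws <;> simp [gapSum]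
  | cons c cs ih =>
    have hcs' : ∀ a ∈ cs, ‖a‖ ≤ 1 := fun a ha => hcs a (.tail c ha)
    rcases ws with _ | ⟨w, ws⟩
    · simpa [gapSum] using one_le_pow₀ hM
    have h₁ := ih (fun a ha => hws a (.tail w ha)) hcs'
    have h₂ := ih hws hcs'
    rw [List.length_cons] at h₂
    have hc : ‖c‖ ≤ 1 := hcs c List.mem_cons_self
    have hw : ‖w‖ ≤ M := hws w List.mem_cons_self
    have hM' : 0 ≤ (cs.length.choose ws.length : ℝ) * M ^ cs.length := by positivity
    simp only [List.length_cons, Nat.choose_succ_succ, Nat.cast_add, pow_succ]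
    calc ‖gapSum (w :: ws) (c :: cs)‖
        ≤ ‖c‖ * ‖gapSum ws cs‖ + ‖w‖ * ‖gapSum (w :: ws) cs‖ :=
          (norm_add_le _ _).trans (add_le_add (norm_mul_le _ _) (norm_mul_le _ _))
      _ ≤ 1 * (cs.length.choose ws.length * M ^ cs.length) +
            M * (cs.length.choose (ws.length + 1) * M ^ cs.length) := by gcongr
      _ ≤ _ := by nlinarith [mul_le_mul_of_nonneg_left hM hM']

section UnitDefect

variable {R : Type*} [NormedCommRing R]

theorem norm_one_sub_mul_le {u : R} (hu : ‖u‖ ≤ 1) (v : R) :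
    ‖1 - u * v‖ ≤ ‖1 - u‖ + ‖1 - v‖ :=
  calc ‖1 - u * v‖ = ‖(1 - u) + u * (1 - v)‖ := by ring_nf
    _ ≤ ‖1 - u‖ + ‖u‖ * ‖1 - v‖ := (norm_add_le _ _).trans (add_le_add le_rfl (norm_mul_le _ _))
    _ ≤ ‖1 - u‖ + ‖1 - v‖ := by gcongr; exact mul_le_of_le_one_left (norm_nonneg _) hu

def defect (l : List R) : ℝ := (l.map fun v => ‖1 - v‖).sum

theorem defect_cons (v : R) (vs : List R) : defect (v :: vs) = ‖1 - v‖ + defect vs :=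
  List.sum_cons

theorem defect_nonneg (l : List R) : 0 ≤ defect l :=
  List.sum_nonneg fun _ h => by obtain ⟨v, -, rfl⟩ := List.mem_map.1 h; exact norm_nonneg _

theorem norm_one_sub_prod_le {vs : List R} (hvs : ∀ v ∈ vs, ‖v‖ ≤ 1) :
    ‖1 - vs.prod‖ ≤ defect vs := by
  induction vs with
  | nil => simp [defect]
  | cons v vs ih =>
    rw [List.prod_cons, defect_cons]
    exact (norm_one_sub_mul_le (hvs v List.mem_cons_self) _).trans
      (add_le_add le_rfl (ih fun a ha => hvs a (.tail v ha)))

variable [NormMulClass R]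

theorem norm_eq_one_and_defect_le_of_mem_insertions {z : R} (hz : ‖z‖ = 1) {vs u : List R}
    (hvs : ∀ v ∈ vs, ‖v‖ = 1) (hu : u ∈ insertions z vs) :
    (∀ a ∈ u, ‖a‖ = 1) ∧ defect u ≤ ‖1 - z‖ + defect vs := by
  induction vs generalizing u with
  | nil =>
    simp only [insertions, List.mem_singleton] at hu
    subst hu
    simp [defect, hz]
  | cons v vs ih =>
    have hv : ‖v‖ = 1 := hvs v List.mem_cons_self
    simp only [insertions, List.mem_cons, List.mem_map] at hu
    rcases hu with rfl | rfl | ⟨u, hu, rfl⟩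
    · simp_all [defect_cons]
    · refine ⟨by simp_all, ?_⟩
      simp only [defect_cons]
      linarith [norm_one_sub_mul_le hz.le v]
    · obtain ⟨hu₁, hu₂⟩ := ih (fun a ha => hvs a (.tail v ha)) hu
      refine ⟨by simp_all, ?_⟩
      simp only [defect_cons]
      linarith

theorem norm_eq_one_and_defect_le_of_mem_partitionProds {zs vs : List R}
    (hzs : ∀ z ∈ zs, ‖z‖ = 1) (hvs : vs ∈ partitionProds zs) :
    (∀ v ∈ vs, ‖v‖ = 1) ∧ defect vs ≤ defect zs := by
  induction zs generalizing vs with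
  | nil => simp_all [partitionProds]
  | cons z zs ih =>
    obtain ⟨u, hu, hvs⟩ := List.mem_flatMap.1 hvs
    obtain ⟨hu₁, hu₂⟩ := ih (fun a ha => hzs a (.tail z ha)) hu
    obtain ⟨hvs₁, hvs₂⟩ :=
      norm_eq_one_and_defect_le_of_mem_insertions (hzs z List.mem_cons_self) hu₁ hvs
    exact ⟨hvs₁, by rw [defect_cons]; linarith⟩

variable [NormOneClass R]

theorem norm_prod_eq_one {vs : List R} (hvs : ∀ v ∈ vs, ‖v‖ = 1) : ‖vs.prod‖ = 1 := by
  rw [List.norm_prod]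
  exact List.prod_eq_one fun _ h => by obtain ⟨v, hv, rfl⟩ := List.mem_map.1 h; exact hvs v hv

theorem norm_eq_one_and_le_defect_of_mem_suffixProds {vs : List R} (hvs : ∀ v ∈ vs, ‖v‖ = 1)
    {u : R} (hu : u ∈ suffixProds vs) : ‖u‖ = 1 ∧ ‖1 - u‖ ≤ defect vs := by
  induction vs with
  | nil => simp [suffixProds] at hu
  | cons v vs ih =>
    rcases List.mem_cons.1 hu with rfl | hu
    · exact ⟨norm_prod_eq_one hvs, norm_one_sub_prod_le fun v hv => (hvs v hv).le⟩
    · obtain ⟨h₁, h₂⟩ := ih (fun a ha => hvs a (.tail v ha)) hu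
      exact ⟨h₁, by rw [defect_cons]; linarith [norm_nonneg (1 - v)]⟩

end UnitDefect

theorem norm_sub_div_le_exp {p : ℝ} (hp0 : 0 < p) {u : ℂ} (hu : ‖u‖ = 1) {D : ℝ}
    (hD : ‖1 - u‖ ≤ D) : ‖(u - (1 - p)) / p‖ ≤ Real.exp (D ^ 2 / (2 * p ^ 2)) := by
  have hsq : ‖u - (1 - p)‖ ^ 2 = p ^ 2 + (1 - p) * ‖1 - u‖ ^ 2 := by
    have hu' : u.re * u.re + u.im * u.im = 1 := by
      rw [← Complex.normSq_apply, ← Complex.sq_norm, hu, one_pow]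
    simp only [Complex.sq_norm, Complex.normSq_apply, Complex.sub_re, Complex.sub_im,
      Complex.one_re, Complex.one_im, Complex.ofReal_re, Complex.ofReal_im]
    linear_combination p * hu'
  have hD2 : ‖1 - u‖ ^ 2 ≤ D ^ 2 := pow_le_pow_left₀ (norm_nonneg _) hD 2
  have hexp : (Real.exp (D ^ 2 / (2 * p ^ 2))) ^ 2 = Real.exp (D ^ 2 / p ^ 2) := by
    rw [← Real.exp_nat_mul]; congr 1; field_simp; ring
  rw [← pow_le_pow_iff_left₀ (norm_nonneg _) (Real.exp_pos _).le two_ne_zero, hexp, norm_div,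
    div_pow, Complex.norm_real, Real.norm_of_nonneg hp0.le, hsq]
  calc (p ^ 2 + (1 - p) * ‖1 - u‖ ^ 2) / p ^ 2 ≤ D ^ 2 / p ^ 2 + 1 := by
        rw [div_add_one (by positivity)]
        exact div_le_div_of_nonneg_right (by nlinarith [norm_nonneg (1 - u)]) (by positivity)
    _ ≤ Real.exp (D ^ 2 / p ^ 2) := Real.add_one_le_exp _

theorem defect_ofFn_le {m : ℕ} {Z : Fin m → ℂ} {δ : ℝ}
    (hZ : ∀ k, ‖Z k‖ = 1 ∧ |(Z k).arg| ≤ δ) : defect (List.ofFn Z) ≤ m * δ := by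
  have hchord : ∀ k, ‖1 - Z k‖ ≤ δ := fun k => by
    have hZk : Z k ≠ 0 := norm_ne_zero_iff.1 ((hZ k).1 ▸ one_ne_zero)
    calc ‖1 - Z k‖ ≤ InnerProductGeometry.angle 1 (Z k) :=
          Complex.norm_sub_le_angle norm_one (hZ k).1
      _ = |(Z k).arg| := Complex.angle_one_left hZk
      _ ≤ δ := (hZ k).2
  rw [defect, List.map_ofFn, List.sum_ofFn]
  simpa using Finset.sum_le_card_nsmul Finset.univ (fun k => ‖1 - Z k‖) δ fun k _ => hchord k

theorem norm_estimatorTerm_le {p : ℝ} (hp0 : 0 < p) (hp1 : p ≤ 1) {n : ℕ} (hn : 1 ≤ n)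
    {y : List Bool} (hy : y.length ≤ n) {vs : List ℂ} (hvs : ∀ v ∈ vs, ‖v‖ = 1) {m : ℕ}
    (hm : vs.length ≤ m) :
    ‖estimatorTerm (p : ℂ) vs y‖ ≤ (n / p) ^ m * Real.exp (n * defect vs ^ 2 / (2 * p ^ 2)) := by
  set M := Real.exp (defect vs ^ 2 / (2 * p ^ 2))
  have hM : 1 ≤ M := Real.one_le_exp (by positivity)
  have hweights : ∀ w ∈ (suffixProds vs).map fun u => (u - (1 - (p : ℂ))) / p, ‖w‖ ≤ M := by
    intro w hw
    obtain ⟨u, hu, rfl⟩ := List.mem_map.1 hw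
    obtain ⟨hu₁, hu₂⟩ := norm_eq_one_and_le_defect_of_mem_suffixProds hvs hu
    exact_mod_cast norm_sub_div_le_exp hp0 hu₁ hu₂
  have hbits : ∀ c ∈ y.map fun b => (b.toNat : ℂ), ‖c‖ ≤ 1 := by
    intro c hc
    obtain ⟨b, -, rfl⟩ := List.mem_map.1 hc
    cases b <;> simp
  have hgap := norm_gapSum_le hM hweights hbits
  rw [List.length_map, List.length_map, length_suffixProds] at hgap
  have hchoose : (y.length.choose vs.length : ℝ) ≤ n ^ vs.length := by
    exact_mod_cast (Nat.choose_le_pow _ _).trans (Nat.pow_le_pow_left hy _)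
  have hnp : 1 ≤ (n : ℝ) / p := by
    rw [one_le_div hp0]; exact hp1.trans (by exact_mod_cast hn)
  calc ‖estimatorTerm (p : ℂ) vs y‖
      = p⁻¹ ^ vs.length * ‖gapSum ((suffixProds vs).map fun u => (u - (1 - (p : ℂ))) / p)
          (y.map fun b => (b.toNat : ℂ))‖ := by
        rw [estimatorTerm, norm_mul, norm_mul, norm_prod_eq_one fun u hu =>
          (norm_eq_one_and_le_defect_of_mem_suffixProds hvs hu).1, norm_pow, norm_inv,
          Complex.norm_real, Real.norm_of_nonneg hp0.le, one_mul]
    _ ≤ p⁻¹ ^ vs.length * (n ^ vs.length * M ^ n) := by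
        gcongr
        exact hgap.trans (by gcongr)
    _ = (n / p) ^ vs.length * M ^ n := by ring
    _ ≤ (n / p) ^ m * M ^ n := by gcongr
    _ = (n / p) ^ m * Real.exp (n * defect vs ^ 2 / (2 * p ^ 2)) := by
        rw [← Real.exp_nat_mul, mul_div_assoc]

theorem norm_traceEstimator_le {p : ℝ} (hp0 : 0 < p) (hp1 : p ≤ 1) {n : ℕ} (hn : 1 ≤ n)
    {y : List Bool} (hy : y.length ≤ n) {zs : List ℂ} (hzs : ∀ z ∈ zs, ‖z‖ = 1) :
    ‖traceEstimator (p : ℂ) zs y‖ ≤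
      zs.length ^ (2 * zs.length) *
        ((n / p) ^ zs.length * Real.exp (n * defect zs ^ 2 / (2 * p ^ 2))) := by
  have hterm : ∀ t ∈ (partitionProds zs).map fun vs => ‖estimatorTerm (p : ℂ) vs y‖,
      t ≤ (n / p) ^ zs.length * Real.exp (n * defect zs ^ 2 / (2 * p ^ 2)) := by
    intro t ht
    obtain ⟨vs, hvs, rfl⟩ := List.mem_map.1 ht
    obtain ⟨hvs₁, hvs₂⟩ := norm_eq_one_and_defect_le_of_mem_partitionProds hzs hvs
    refine (norm_estimatorTerm_le hp0 hp1 hn hy hvs₁ (length_le_of_mem_partitionProds hvs)).trans ?_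
    gcongr
    exact defect_nonneg vs
  have hcount : ((partitionProds zs).length : ℝ) ≤ zs.length ^ (2 * zs.length) := by
    exact_mod_cast length_partitionProds_le zs
  calc ‖traceEstimator (p : ℂ) zs y‖
      ≤ ((partitionProds zs).map fun vs => ‖estimatorTerm (p : ℂ) vs y‖).sum := by
        simpa [traceEstimator, List.map_map, Function.comp_def] using
          List.le_sum_of_subadditive norm norm_zero.le norm_add_le
            ((partitionProds zs).map fun vs => estimatorTerm (p : ℂ) vs y)
    _ ≤ (partitionProds zs).length *
          ((n / p) ^ zs.length * Real.exp (n * defect zs ^ 2 / (2 * p ^ 2))) := by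
        simpa using List.sum_le_card_nsmul _ _ hterm
    _ ≤ _ := by gcongr

theorem norm_traceEstimator_ofFn_le {p : ℝ} (hp0 : 0 < p) (hp1 : p ≤ 1) {n : ℕ} (hn : 1 ≤ n)
    {y : List Bool} (hy : y.length ≤ n) {m : ℕ} {Z : Fin m → ℂ} {L : ℝ}
    (hZ : ∀ k, ‖Z k‖ = 1 ∧ |(Z k).arg| ≤ 1 / L) :
    ‖traceEstimator (p : ℂ) (List.ofFn Z) y‖ ≤
      (p⁻¹ * m * n) ^ ((2 : ℝ) * m) * Real.exp (2 * m ^ 2 * n / (p ^ 2 * L ^ 2)) := by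
  have hbound := norm_traceEstimator_le hp0 hp1 hn hy fun z hz => by
    obtain ⟨k, rfl⟩ := List.mem_ofFn.1 hz
    exact (hZ k).1
  rw [List.length_ofFn] at hbound
  have hnp : 1 ≤ (n : ℝ) / p := by
    rw [one_le_div hp0]; exact hp1.trans (by exact_mod_cast hn)
  have hpoly : (m : ℝ) ^ (2 * m) * (n / p) ^ m ≤ (p⁻¹ * m * n) ^ (2 * m) :=
    calc (m : ℝ) ^ (2 * m) * (n / p) ^ m ≤ (m : ℝ) ^ (2 * m) * (n / p) ^ (2 * m) := by
          gcongr; omega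
      _ = (p⁻¹ * m * n) ^ (2 * m) := by rw [← mul_pow]; ring
  have hdefect : defect (List.ofFn Z) ^ 2 ≤ m ^ 2 / L ^ 2 :=
    calc defect (List.ofFn Z) ^ 2 ≤ (m * (1 / L)) ^ 2 :=
          pow_le_pow_left₀ (defect_nonneg _) (defect_ofFn_le hZ) 2
      _ = m ^ 2 / L ^ 2 := by ring
  have hexponent : n * defect (List.ofFn Z) ^ 2 / (2 * p ^ 2) ≤
      2 * m ^ 2 * n / (p ^ 2 * L ^ 2) :=
    calc n * defect (List.ofFn Z) ^ 2 / (2 * p ^ 2)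
        ≤ n * (m ^ 2 / L ^ 2) / (2 * p ^ 2) := by gcongr
      _ = 2 * m ^ 2 * n / (p ^ 2 * L ^ 2) / 4 := by ring
      _ ≤ 2 * m ^ 2 * n / (p ^ 2 * L ^ 2) := div_le_self (by positivity) (by norm_num)
  rw [show (2 : ℝ) * m = ((2 * m : ℕ) : ℝ) by push_cast; ring, Real.rpow_natCast]
  calc ‖traceEstimator (p : ℂ) (List.ofFn Z) y‖
      ≤ (m : ℝ) ^ (2 * m) * (n / p) ^ m *
          Real.exp (n * defect (List.ofFn Z) ^ 2 / (2 * p ^ 2)) := by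
        rw [mul_assoc]; exact hbound
    _ ≤ _ := by gcongr

theorem stmt_11 :
    ∃ C : ℝ, 0 < C ∧
      ∀ n : ℕ, 1 ≤ n → ∀ q : ℝ, 0 < q → q < 1 → ∀ m : ℕ, 1 ≤ m →
        ∀ Z : Fin m → ℂ, (∀ k, Z k ≠ 0) →
          ∃ g : List Bool → ℂ,
            -- unbiasedness: the expectation over a trace `x̃` of `x` equals the product
            (∀ x : ℕ → Bool,
              (∑ mask : Fin n → Bool, (maskProb q mask : ℂ) * g (applyMask x mask)) =
                ∏ k : Fin m, ∑ i ∈ Finset.range n,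
                  (if x i then 1 else 0 : ℂ) * Z k ^ (i + 1)) ∧
            -- the boundedness claim
            (∀ L : ℝ, 1 ≤ L →
              (∀ k, ‖Z k‖ = 1 ∧ |Complex.arg (Z k)| ≤ 1 / L) →
              ∀ w : List Bool, w.length ≤ n →
                ‖g w‖ ≤
                  ((1 - q)⁻¹ * m * n) ^ (C * m) *
                    Real.exp (C * m ^ 2 * n / ((1 - q) ^ 2 * L ^ 2))) := by
  refine ⟨2, two_pos, fun n hn q hq0 hq1 m _ Z _ =>
    ⟨traceEstimator ((1 - q : ℝ) : ℂ) (List.ofFn Z), fun x => ?_, fun L _ hZ w hw => ?_⟩⟩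
  · have hp : ((1 - q : ℝ) : ℂ) ≠ 0 := Complex.ofReal_ne_zero.2 (sub_pos.2 hq1).ne'
    rw [sum_maskProb_mul_eq_traceExpect, traceExpect_traceEstimator hp, List.map_ofFn,
      List.prod_ofFn]
    exact Finset.prod_congr rfl fun k _ => tupleSum_singleton_ofFn (Z k) x n
  · exact norm_traceEstimator_ofFn_le (sub_pos.2 hq1) (by linarith) hn hw hZ
end

section
/- Let x = x₁⋯x_n ∈ {0,1}^n be a circular string, let s = s₁⋯s_k ∈ {0,1}^k with 1 ≤ k ≤ n, and let q ∈ (0,1) be the deletion probability. For 0 ≤ i ≤ n−k, let c_i be the number of pairs (j, (t₁,…,t_k)) with j ∈ {0,…,n−1} and 0 ≤ t₁ < t₂ < ⋯ < t_k = k+i−1 such that x_{j+t_ℓ} = s_ℓ for all 1 ≤ ℓ ≤ k (indices of x taken modulo n). Then the probability that a circular trace of x starts with s — i.e., that the output of the deletion channel applied to x^{(J)} (with J uniform in {0,…,n−1}) has length at least k and its first k bits equal s — is exactly (1/n)·(1−q)^k · Σ_{i=0}^{n−k} c_i q^i. -/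
open Classical in
/-- The probability that a circular trace of the length-`n` string `x` (deletion
probability `q`) satisfies the event `E`: a uniformly random rotation `J` followed
by an independent deletion pattern. -/
noncomputable def circProb (q : ℝ) (n : ℕ) (x : ℕ → Bool) (E : List Bool → Prop) : ℝ :=
  ∑ j : Fin n, ∑ m : Fin n → Bool,
    if E (applyMask (cyclicShift n x j.val) m) then ((1 : ℝ) / n) * maskProb q m else 0

/-!
A trace starts with `s` exactly when its first `k` retained positions form a strictly increasing
tuple `t` with `x^{(j)} ∘ t = s`, and these events are disjoint for distinct `t`. Because the
deletion pattern is a product measure, the event "the first `k` retained positions are `t`" only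
fixes the pattern on the positions `0, …, t_k` (retained on the `t_ℓ`, deleted elsewhere), so it
has probability `(1 - q)^k q^(t_k + 1 - k)`. Grouping the tuples by `i = t_k + 1 - k` and
averaging over the rotation `j` gives the formula.
-/

namespace List

theorem ofFn_prefix_map_iff {α β : Type*} {k : ℕ} (s : Fin k → β) (g : α → β) (l : List α) :
    ofFn s <+: l.map g ↔ ∃ t : Fin k → α, l.take k = ofFn t ∧ g ∘ t = s := by
  rw [prefix_iff_eq_take, length_ofFn, ← map_take]
  constructor
  · intro h
    have hlen : (l.take k).length = k := by simpa using congrArg length h.symm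
    refine ⟨fun ℓ => (l.take k)[ℓ.val], ?_, ?_⟩
    · exact ext_getElem (by simp [hlen]) fun i _ _ => by simp
    · funext ℓ
      simpa using (getElem_of_eq h (by simp : ℓ.val < (ofFn s).length)).symm
  · rintro ⟨t, ht, rfl⟩
    rw [ht, map_ofFn]

theorem Pairwise.take_eq_ofFn_iff {α : Type*} [LinearOrder α] {L : List α}
    (hL : L.Pairwise (· < ·)) {k : ℕ} {t : Fin (k + 1) → α} (ht : StrictMono t) :
    L.take (k + 1) = ofFn t ↔ ∀ i ≤ t (Fin.last k), (i ∈ L ↔ i ∈ Set.range t) := by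
  have hle : ∀ ℓ, t ℓ ≤ t (Fin.last k) := fun ℓ => ht.monotone (Fin.le_last ℓ)
  constructor
  · intro h i hi
    rw [← take_append_drop (k + 1) L, h] at hL ⊢
    rw [mem_append, mem_ofFn' t]
    refine ⟨fun hmem => hmem.resolve_right fun hdrop => ?_, Or.inl⟩
    exact (pairwise_append.1 hL).2.2 _ (mem_ofFn' t _ |>.2 ⟨_, rfl⟩) _ hdrop |>.not_ge hi
  · intro h
    have hsplit : L = ofFn t ++ L.filter (t (Fin.last k) < ·) := by
      refine hL.eq_of_mem_iff (pairwise_append.2 ⟨pairwise_ofFn.2 ht, hL.filter _, ?_⟩) ?_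
      · intro a ha b hb
        obtain ⟨ℓ, rfl⟩ := mem_ofFn.1 ha
        exact (hle ℓ).trans_lt (by simpa using (mem_filter.1 hb).2)
      · intro a
        rw [mem_append, mem_ofFn', mem_filter, decide_eq_true_iff]
        by_cases ha : a ≤ t (Fin.last k)
        · simp [h a ha, ha]
        · have : a ∉ Set.range t := fun ⟨ℓ, hℓ⟩ => ha (hℓ ▸ hle ℓ)
          simp [this, lt_of_not_ge ha]
    rw [hsplit, take_left' (length_ofFn)]

end List

open Finset

section DeletionChannel

variable {n : ℕ}

def retainedPositions (m : Fin n → Bool) : List (Fin n) :=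
  (List.finRange n).filter (fun i => m i)

theorem pairwise_lt_retainedPositions (m : Fin n → Bool) :
    (retainedPositions m).Pairwise (· < ·) :=
  (List.pairwise_lt_finRange n).filter _

theorem mem_retainedPositions {m : Fin n → Bool} {i : Fin n} :
    i ∈ retainedPositions m ↔ m i = true := by
  simp [retainedPositions]

theorem applyMask_eq_map_retainedPositions (y : ℕ → Bool) (m : Fin n → Bool) :
    applyMask y m = (retainedPositions m).map (fun i => y i.val) :=
  rfl

theorem sum_maskProb_of_eqOn (q : ℝ) (S : Finset (Fin n)) (f : Fin n → Bool) :
    ∑ m : Fin n → Bool, (if ∀ i ∈ S, m i = f i then maskProb q m else 0) =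
      ∏ i ∈ S, if f i then 1 - q else q := by
  have hfactor (i : Fin n) :
      ∑ b : Bool, (if i ∈ S → b = f i then (if b then 1 - q else q) else 0) =
        if i ∈ S then (if f i then 1 - q else q) else 1 := by
    by_cases hi : i ∈ S <;> cases f i <;> simp [hi]
  rw [← Fintype.prod_ite_mem, ← Finset.prod_congr rfl fun i _ => hfactor i, Fintype.prod_sum]
  refine Finset.sum_congr rfl fun m _ => ?_
  rw [Finset.prod_ite_zero, maskProb]
  simp only [Finset.mem_univ, forall_const]

theorem StrictMono.le_apply_last {k : ℕ} {t : Fin (k + 1) → Fin n} (ht : StrictMono t) :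
    k ≤ t (Fin.last k) := by
  have := card_le_card (s := univ.image t) (t := Iic (t (Fin.last k)))
    fun i hi => by
      obtain ⟨ℓ, -, rfl⟩ := mem_image.1 hi
      exact mem_Iic.2 (ht.monotone (Fin.le_last ℓ))
  rw [card_image_of_injective _ ht.injective, Fin.card_Iic] at this
  simpa using this

theorem sum_maskProb_take_retainedPositions (q : ℝ) {k : ℕ} {t : Fin (k + 1) → Fin n}
    (ht : StrictMono t) :
    ∑ m : Fin n → Bool,
        (if (retainedPositions m).take (k + 1) = List.ofFn t then maskProb q m else 0) =
      (1 - q) ^ (k + 1) * q ^ ((t (Fin.last k) : ℕ) - k) := by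
  set a := t (Fin.last k)
  have hcond (m : Fin n → Bool) : (retainedPositions m).take (k + 1) = List.ofFn t ↔
      ∀ i ∈ Iic a, m i = decide (i ∈ univ.image t) := by
    rw [(pairwise_lt_retainedPositions m).take_eq_ofFn_iff ht]
    simp only [mem_retainedPositions, mem_Iic, mem_image, mem_univ, true_and, Set.mem_range]
    exact forall₂_congr fun i _ => by cases m i <;> simp
  have hR : (Iic a).filter (· ∈ univ.image t) = univ.image t := by
    rw [filter_mem_eq_inter, inter_eq_right]
    intro i hi
    obtain ⟨ℓ, -, rfl⟩ := mem_image.1 hi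
    exact mem_Iic.2 (ht.monotone (Fin.le_last ℓ))
  have hRcard : #(univ.image t) = k + 1 := by
    rw [card_image_of_injective _ ht.injective, card_univ, Fintype.card_fin]
  have hcompl := card_filter_add_card_filter_not (s := Iic a) (· ∈ univ.image t)
  rw [hR, hRcard, Fin.card_Iic] at hcompl
  simp_rw [hcond]
  rw [sum_maskProb_of_eqOn]
  simp only [decide_eq_true_eq]
  rw [prod_ite, prod_const, prod_const, hR, hRcard]
  congr 2
  omega

theorem sum_maskProb_ofFn_prefix_eq_sum_strictMono (q : ℝ) {k : ℕ} (y : ℕ → Bool)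
    (s : Fin (k + 1) → Bool) :
    ∑ m : Fin n → Bool, (if List.ofFn s <+: applyMask y m then maskProb q m else 0) =
      ∑ t : Fin (k + 1) → Fin n with StrictMono t ∧ ∀ ℓ, y (t ℓ).val = s ℓ,
        (1 - q) ^ (k + 1) * q ^ ((t (Fin.last k) : ℕ) - k) := by
  set T := univ.filter fun t : Fin (k + 1) → Fin n => StrictMono t ∧ ∀ ℓ, y (t ℓ) = s ℓ
  have hsplit (m : Fin n → Bool) :
      (if List.ofFn s <+: applyMask y m then maskProb q m else 0) =
        ∑ t ∈ T, if (retainedPositions m).take (k + 1) = List.ofFn t then maskProb q m else 0 := by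
    simp only [applyMask_eq_map_retainedPositions, List.ofFn_prefix_map_iff]
    by_cases h : ∃ t, (retainedPositions m).take (k + 1) = List.ofFn t ∧
        (fun i : Fin n => y i) ∘ t = s
    · obtain ⟨t₀, ht₀, hs₀⟩ := h
      have hmono : StrictMono t₀ := List.pairwise_ofFn.1 <|
        ht₀ ▸ (pairwise_lt_retainedPositions m).sublist (List.take_sublist _ _)
      rw [if_pos ⟨t₀, ht₀, hs₀⟩, ht₀]
      simp_rw [List.ofFn_inj]
      rw [sum_ite_eq, if_pos (mem_filter.2 ⟨mem_univ _, hmono, congrFun hs₀⟩)]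
    · rw [if_neg h]
      refine (sum_eq_zero fun t ht => if_neg fun htake => h ?_).symm
      exact ⟨t, htake, funext (mem_filter.1 ht).2.2⟩
  rw [sum_congr rfl fun m _ => hsplit m, sum_comm]
  exact sum_congr rfl fun t ht => sum_maskProb_take_retainedPositions q (mem_filter.1 ht).2.1

theorem sum_maskProb_ofFn_prefix (q : ℝ) {k : ℕ} (y : ℕ → Bool) (s : Fin (k + 1) → Bool) :
    ∑ m : Fin n → Bool, (if List.ofFn s <+: applyMask y m then maskProb q m else 0) =
      (1 - q) ^ (k + 1) * ∑ i ∈ range (n - (k + 1) + 1),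
        (#{t : Fin (k + 1) → Fin n |
          StrictMono t ∧ (t (Fin.last k) : ℕ) = k + i ∧ ∀ ℓ, y (t ℓ).val = s ℓ} : ℝ) * q ^ i := by
  have hg (t : Fin (k + 1) → Fin n) : (t (Fin.last k) : ℕ) - k ∈ range (n - (k + 1) + 1) :=
    mem_range.2 (by have := (t (Fin.last k)).isLt; omega)
  rw [sum_maskProb_ofFn_prefix_eq_sum_strictMono, ← sum_fiberwise_of_maps_to fun t _ => hg t,
    mul_sum]
  refine sum_congr rfl fun i _ => ?_
  have hfiber : ((univ.filter fun t : Fin (k + 1) → Fin n =>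
      StrictMono t ∧ ∀ ℓ, y (t ℓ).val = s ℓ).filter fun t => (t (Fin.last k) : ℕ) - k = i) =
      univ.filter fun t : Fin (k + 1) → Fin n =>
        StrictMono t ∧ (t (Fin.last k) : ℕ) = k + i ∧ ∀ ℓ, y (t ℓ).val = s ℓ := by
    rw [filter_filter]
    refine filter_congr fun t _ => ⟨fun ⟨⟨hmono, hy⟩, hi⟩ => ⟨hmono, ?_, hy⟩,
      fun ⟨hmono, hi, hy⟩ => ⟨⟨hmono, hy⟩, by omega⟩⟩
    have := hmono.le_apply_last
    omega
  rw [sum_congr rfl fun t ht => by rw [(mem_filter.1 ht).2], sum_const, nsmul_eq_mul, hfiber]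
  ring

def strictMonoFinEquiv {k : ℕ} (P : (Fin (k + 1) → ℕ) → Prop)
    (hP : ∀ t, StrictMono t → P t → t (Fin.last k) < n) :
    {t : Fin (k + 1) → Fin n // StrictMono t ∧ P (fun ℓ => t ℓ)} ≃
      {t : Fin (k + 1) → ℕ // StrictMono t ∧ P t} where
  toFun t := ⟨fun ℓ => t.1 ℓ, fun _ _ h => t.2.1 h, t.2.2⟩
  invFun t := ⟨fun ℓ => ⟨t.1 ℓ, (t.2.1.monotone (Fin.le_last ℓ)).trans_lt (hP _ t.2.1 t.2.2)⟩,
    fun _ _ h => t.2.1 h, t.2.2⟩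
  left_inv _ := rfl
  right_inv _ := rfl

theorem natCard_strictMono_prod {k : ℕ} (R : Fin n → (Fin (k + 1) → ℕ) → Prop)
    [∀ j, DecidablePred (R j)] {a : ℕ} (ha : a < n) :
    Nat.card {p : Fin n × (Fin (k + 1) → ℕ) //
        StrictMono p.2 ∧ p.2 (Fin.last k) = a ∧ R p.1 p.2} =
      ∑ j, #{t : Fin (k + 1) → Fin n |
        StrictMono t ∧ (t (Fin.last k) : ℕ) = a ∧ R j (fun ℓ => t ℓ)} := by
  rw [Nat.card_congr ((Equiv.subtypeProdEquivSigmaSubtype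
      fun j t => StrictMono t ∧ t (Fin.last k) = a ∧ R j t).trans
    (Equiv.sigmaCongrRight fun j =>
      (strictMonoFinEquiv (fun t => t (Fin.last k) = a ∧ R j t) fun _ _ h => h.1 ▸ ha).symm)),
    Nat.card_sigma]
  simp only [Nat.card_eq_fintype_card, Fintype.card_subtype]

end DeletionChannel

theorem stmt_17 (n k : ℕ) (hk1 : 1 ≤ k) (hkn : k ≤ n)
    (q : ℝ) (x : ℕ → Bool) (s : Fin k → Bool) :
    -- the probability that a circular trace of `x` starts with `s`
    circProb q n x (fun w => ((List.finRange k).map s) <+: w) =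
      ((1 : ℝ) / n) * (1 - q) ^ k *
        ∑ i ∈ Finset.range (n - k + 1),
          -- `c_i` is the number of pairs `(j, (t₁, …, t_k))` with
          -- `0 ≤ t₁ < ⋯ < t_k = k + i − 1` and `x_{j + t_ℓ} = s_ℓ` for all `ℓ`
          (Nat.card {p : Fin n × (Fin k → ℕ) //
              StrictMono p.2 ∧ p.2 ⟨k - 1, by omega⟩ = k + i - 1 ∧
                ∀ ℓ : Fin k, x ((p.1.val + p.2 ℓ) % n) = s ℓ} : ℝ) * q ^ i := by
  obtain ⟨k, rfl⟩ : ∃ k', k = k' + 1 := ⟨k - 1, by omega⟩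
  set A := fun (j : Fin n) (i : ℕ) => #{t : Fin (k + 1) → Fin n |
    StrictMono t ∧ (t (Fin.last k) : ℕ) = k + i ∧ ∀ ℓ, cyclicShift n x j (t ℓ).val = s ℓ}
  calc circProb q n x _
      = ∑ j : Fin n, 1 / n *
          ((1 - q) ^ (k + 1) * ∑ i ∈ range (n - (k + 1) + 1), (A j i : ℝ) * q ^ i) := by
        simp only [circProb, ← List.ofFn_eq_map]
        refine sum_congr rfl fun j _ => ?_
        rw [← sum_maskProb_ofFn_prefix, mul_sum]
        exact sum_congr rfl fun m _ => by split_ifs <;> simp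
    _ = 1 / n * (1 - q) ^ (k + 1) *
          ∑ i ∈ range (n - (k + 1) + 1), ((∑ j, A j i : ℕ) : ℝ) * q ^ i := by
        simp only [← mul_sum, sum_comm (γ := Fin n), Nat.cast_sum, sum_mul]
        ring
    _ = _ := by
        refine congrArg _ (sum_congr rfl fun i hi => congrArg (· * q ^ i) (congrArg _ ?_))
        rw [mem_range] at hi
        refine ((natCard_strictMono_prod (fun j t => ∀ ℓ, x ((j.val + t ℓ) % n) = s ℓ)
          (a := k + 1 + i - 1) (by omega)).trans ?_).symm
        refine sum_congr rfl fun j _ => congrArg card (filter_congr fun t _ => ?_)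
        simp only [cyclicShift, Nat.add_comm (j : ℕ), show k + 1 + i - 1 = k + i by omega]
end

section
/- Let n ≥ 2 and 2 ≤ k ≤ n, and let x, y ∈ {0,1}^n be circular strings. Suppose that the n cyclic consecutive substrings of x of length k−1, namely x_i x_{i+1} ⋯ x_{i+k−2} for 1 ≤ i ≤ n (indices modulo n), are pairwise distinct. If the multiset of cyclic consecutive substrings of length k of x equals the multiset of cyclic consecutive substrings of length k of y, then y is a cyclic shift of x. -/
/-- The cyclic consecutive substring `x_i x_{i+1} ⋯ x_{i+k−1}` of the length-`n`
circular string `x`, indices taken modulo `n`. -/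
def subword (n : ℕ) (x : ℕ → Bool) (i k : ℕ) : List Bool :=
  (List.range k).map (fun ℓ => x ((i + ℓ) % n))

/-- The multiset of all `n` cyclic consecutive substrings of length `k` of `x`. -/
def subwordMultiset (n : ℕ) (x : ℕ → Bool) (k : ℕ) : Multiset (List Bool) :=
  Multiset.map (fun i => subword n x i k) (Multiset.range n)

lemma subword_take (n : ℕ) (z : ℕ → Bool) (i k₁ k₂ : ℕ) (h : k₁ ≤ k₂) :
    subword n z i k₁ = (subword n z i k₂).take k₁ := by
  simp [subword, ← List.map_take, List.take_range, Nat.min_eq_left h]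

lemma subword_drop (n : ℕ) (z : ℕ → Bool) (i m : ℕ) :
    subword n z ((i + 1) % n) m = (subword n z i (m + 1)).drop 1 := by
  simp only [subword, List.range_succ_eq_map, List.map_cons, List.drop_succ_cons,
    List.drop_zero, List.map_map]
  apply List.map_congr_left
  intro ℓ _
  simp only [Function.comp]
  congr 1
  rw [Nat.mod_add_mod]
  congr 1
  omega

theorem stmt_18 (n k : ℕ) (hn : 2 ≤ n) (hk2 : 2 ≤ k) (hkn : k ≤ n)
    (x y : ℕ → Bool)
    (hdist : ∀ i < n, ∀ j < n, subword n x i (k - 1) = subword n x j (k - 1) → i = j)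
    (hms : subwordMultiset n x k = subwordMultiset n y k) :
    ∃ j : ℕ, ∀ i < n, y i = x ((i + j) % n) := by
  have h1k : 1 ≤ k := by omega
  have key : ∀ i < n, ∃ m < n, subword n x m k = subword n y i k := by
    intro i hi
    have hmem : subword n y i k ∈ subwordMultiset n x k := by
      rw [hms]
      exact Multiset.mem_map.2 ⟨i, Multiset.mem_range.2 hi, rfl⟩
    rcases Multiset.mem_map.1 hmem with ⟨m, hm, h⟩
    exact ⟨m, Multiset.mem_range.1 hm, h⟩
  obtain ⟨j, hj, hj0⟩ := key 0 (by omega)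
  refine ⟨j, ?_⟩
  have main : ∀ i, i < n → subword n x ((j + i) % n) k = subword n y i k := by
    intro i
    induction i with
    | zero =>
      intro _
      simpa [Nat.mod_eq_of_lt hj] using hj0
    | succ i ih =>
      intro hi
      have hx := ih (by omega)
      obtain ⟨m, hm, hmk⟩ := key (i + 1) hi
      have hmod : (i + 1) % n = i + 1 := Nat.mod_eq_of_lt hi
      have hs : subword n x (((j + i) % n + 1) % n) (k - 1)
          = subword n y (i + 1) (k - 1) := by
        have e1 := subword_drop n x ((j + i) % n) (k - 1)
        have e2 := subword_drop n y i (k - 1)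
        rw [Nat.sub_add_cancel h1k] at e1 e2
        rw [hmod] at e2
        rw [e1, hx]
        exact e2.symm
      have hp : subword n x m (k - 1) = subword n y (i + 1) (k - 1) := by
        rw [subword_take n x m (k - 1) k (by omega),
          subword_take n y (i + 1) (k - 1) k (by omega), hmk]
      have heq : m = ((j + i) % n + 1) % n := by
        apply hdist m hm _ (Nat.mod_lt _ (by omega))
        rw [hp, ← hs]
      have hfin : (j + (i + 1)) % n = m := by
        rw [heq, Nat.mod_add_mod, Nat.add_assoc]
      rw [hfin]
      exact hmk
  intro i hi
  have hmi := main i hi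
  have h1 : subword n x ((j + i) % n) 1 = subword n y i 1 := by
    rw [subword_take n x _ 1 k h1k, subword_take n y _ 1 k h1k, hmi]
  simp only [subword, List.range_succ, List.range_zero, List.nil_append,
    List.map_cons, List.map_nil, Nat.add_zero, List.cons.injEq, and_true] at h1
  rw [Nat.mod_mod_of_dvd _ dvd_rfl, Nat.mod_eq_of_lt hi] at h1
  rw [Nat.add_comm i j]
  exact h1.symm
end
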